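/- arXiv:cs/0606059 — 4 statements merged into one kernel-verified Lean document; each statement's English description precedes it below -/
import Mathlib

section
/- Let m and n be integers with 2 ≤ m ≤ n and 3 | m·n. Then the rectangle R(m,n) is tileable by L-trominoes if and only if it is not the case that m = 3 and n is odd (i.e., R(m,n) is tileable except exactly for the rectangles 3×(2k+1) with k ≥ 1). -/
abbrev Cell : Type := ℤ × ℤ

/-- The m×n rectangle of cells (i,j), 1 ≤ i ≤ m (row), 1 ≤ j ≤ n (column). -/
def rect (m n : ℤ) : Set Cell :=
  {c : Cell | 1 ≤ c.1 ∧ c.1 ≤ m ∧ 1 ≤ c.2 ∧ c.2 ≤ n}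

/-- An L-tromino: a 2×2 block minus one of its cells. -/
def IsTromino (T : Set Cell) : Prop :=
  ∃ i j : ℤ, ∃ c : Cell,
    c ∈ ({(i, j), (i + 1, j), (i, j + 1), (i + 1, j + 1)} : Set Cell) ∧
    T = ({(i, j), (i + 1, j), (i, j + 1), (i + 1, j + 1)} : Set Cell) \ {c}

def IsHDomino (D : Set Cell) : Prop := ∃ i j : ℤ, D = {(i, j), (i, j + 1)}

def IsVDomino (D : Set Cell) : Prop := ∃ i j : ℤ, D = {(i, j), (i + 1, j)}

def IsDomino (D : Set Cell) : Prop := IsHDomino D ∨ IsVDomino D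

/-- A partition of `S` into L-trominoes, identified with its set of pieces. -/
def IsTromTiling (P : Set (Set Cell)) (S : Set Cell) : Prop :=
  (∀ p ∈ P, IsTromino p) ∧ P.PairwiseDisjoint id ∧ ⋃₀ P = S

def Tileable (S : Set Cell) : Prop := ∃ P, IsTromTiling P S

/-- A partition of `S` into dominoes, identified with its set of pieces. -/
def IsDominoTiling (P : Set (Set Cell)) (S : Set Cell) : Prop :=
  (∀ p ∈ P, IsDomino p) ∧ P.PairwiseDisjoint id ∧ ⋃₀ P = S

/-- A partition of `S` into `k` L-trominoes and exactly one piece satisfying `dom`. -/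
def IsMixedTiling (P : Set (Set Cell)) (S : Set Cell)
    (dom : Set Cell → Prop) (k : ℕ) : Prop :=
  P.PairwiseDisjoint id ∧ ⋃₀ P = S ∧
  (∀ p ∈ P, IsTromino p ∨ dom p) ∧
  {p ∈ P | dom p}.ncard = 1 ∧ {p ∈ P | IsTromino p}.ncard = k

section Infra

lemma tileable_of_tromino {T : Set Cell} (h : IsTromino T) : Tileable T :=
  ⟨{T}, fun p hp => by rwa [Set.mem_singleton_iff.mp hp],
    Set.pairwiseDisjoint_singleton _ _, Set.sUnion_singleton T⟩

lemma tileable_empty : Tileable (∅ : Set Cell) :=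
  ⟨∅, fun p hp => absurd hp (Set.notMem_empty p),
    Set.pairwiseDisjoint_empty, Set.sUnion_empty⟩

lemma Tileable.union {S T : Set Cell} (hS : Tileable S) (hT : Tileable T)
    (h : Disjoint S T) : Tileable (S ∪ T) := by
  obtain ⟨P, hP1, hP2, hP3⟩ := hS
  obtain ⟨Q, hQ1, hQ2, hQ3⟩ := hT
  refine ⟨P ∪ Q, ?_, ?_, ?_⟩
  · rintro p (hp | hp)
    exacts [hP1 p hp, hQ1 p hp]
  · rintro x (hx | hx) y (hy | hy) hxy
    · exact hP2 hx hy hxy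
    · exact h.mono (hP3 ▸ Set.subset_sUnion_of_mem hx) (hQ3 ▸ Set.subset_sUnion_of_mem hy)
    · exact (h.symm).mono (hQ3 ▸ Set.subset_sUnion_of_mem hx) (hP3 ▸ Set.subset_sUnion_of_mem hy)
    · exact hQ2 hx hy hxy
  · rw [Set.sUnion_union, hP3, hQ3]

lemma Tileable.addTromino {S T : Set Cell} (hS : Tileable S) (hT : IsTromino T)
    (h : Disjoint S T) : Tileable (S ∪ T) :=
  hS.union (tileable_of_tromino hT) h

end Infra

section Base

lemma tile_2_3 : Tileable (rect 2 3) := by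
  have e : rect 2 3 = ({(1,1),(2,1),(2,2)} : Set Cell) ∪ ({(1,2),(1,3),(2,3)} : Set Cell) := by
    ext ⟨x,y⟩
    simp only [rect, Set.mem_union, Set.mem_insert_iff, Set.mem_singleton_iff, Set.mem_setOf_eq, Prod.mk.injEq]
    omega
  rw [e]
  have h0 : IsTromino ({(1,1),(2,1),(2,2)} : Set Cell) :=
    ⟨1, 1, (1,2), by simp, by ext ⟨x,y⟩; simp only [Set.mem_insert_iff, Set.mem_singleton_iff, Set.mem_diff, Prod.mk.injEq]; omega⟩
  have h1 : IsTromino ({(1,2),(1,3),(2,3)} : Set Cell) :=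
    ⟨1, 2, (2,2), by simp, by ext ⟨x,y⟩; simp only [Set.mem_insert_iff, Set.mem_singleton_iff, Set.mem_diff, Prod.mk.injEq]; omega⟩
  refine Tileable.addTromino ?_ h1 (by rw [Set.disjoint_left]; rintro ⟨x,y⟩ hu hv; simp only [Set.mem_union, Set.mem_insert_iff, Set.mem_singleton_iff, Prod.mk.injEq] at hu hv; omega)
  exact tileable_of_tromino h0

lemma tile_3_2 : Tileable (rect 3 2) := by
  have e : rect 3 2 = ({(1,1),(1,2),(2,2)} : Set Cell) ∪ ({(2,1),(3,1),(3,2)} : Set Cell) := by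
    ext ⟨x,y⟩
    simp only [rect, Set.mem_union, Set.mem_insert_iff, Set.mem_singleton_iff, Set.mem_setOf_eq, Prod.mk.injEq]
    omega
  rw [e]
  have h0 : IsTromino ({(1,1),(1,2),(2,2)} : Set Cell) :=
    ⟨1, 1, (2,1), by simp, by ext ⟨x,y⟩; simp only [Set.mem_insert_iff, Set.mem_singleton_iff, Set.mem_diff, Prod.mk.injEq]; omega⟩
  have h1 : IsTromino ({(2,1),(3,1),(3,2)} : Set Cell) :=
    ⟨2, 1, (2,2), by simp, by ext ⟨x,y⟩; simp only [Set.mem_insert_iff, Set.mem_singleton_iff, Set.mem_diff, Prod.mk.injEq]; omega⟩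
  refine Tileable.addTromino ?_ h1 (by rw [Set.disjoint_left]; rintro ⟨x,y⟩ hu hv; simp only [Set.mem_union, Set.mem_insert_iff, Set.mem_singleton_iff, Prod.mk.injEq] at hu hv; omega)
  exact tileable_of_tromino h0


end Base

section Translate

def trf (v : Cell) : Cell → Cell := fun c => (c.1 + v.1, c.2 + v.2)

lemma trf_injective (v : Cell) : Function.Injective (trf v) := by
  rintro ⟨a, b⟩ ⟨c, d⟩ h
  simp only [trf, Prod.mk.injEq] at h ⊢
  omega

lemma isTromino_trf {T : Set Cell} (v : Cell) (h : IsTromino T) : IsTromino (trf v '' T) := by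
  obtain ⟨i, j, c, hc, rfl⟩ := h
  refine ⟨i + v.1, j + v.2, trf v c, ?_, ?_⟩
  · simp only [Set.mem_insert_iff, Set.mem_singleton_iff] at hc ⊢
    rcases hc with rfl | rfl | rfl | rfl
    · left; simp [trf]
    · right; left; simp [trf]; omega
    · right; right; left; simp [trf]; omega
    · right; right; right; simp [trf]; omega
  · rw [Set.image_diff (trf_injective v), Set.image_singleton]
    congr 1
    ext ⟨x, y⟩
    simp only [Set.mem_image, Set.mem_insert_iff, Set.mem_singleton_iff, Prod.mk.injEq, trf,
      Prod.exists]
    constructor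
    · rintro ⟨a, b, (⟨rfl, rfl⟩ | ⟨rfl, rfl⟩ | ⟨rfl, rfl⟩ | ⟨rfl, rfl⟩), rfl, rfl⟩ <;> omega
    · rintro (⟨rfl, rfl⟩ | ⟨rfl, rfl⟩ | ⟨rfl, rfl⟩ | ⟨rfl, rfl⟩)
      · exact ⟨i, j, by omega⟩
      · exact ⟨i + 1, j, by omega⟩
      · exact ⟨i, j + 1, by omega⟩
      · exact ⟨i + 1, j + 1, by omega⟩

lemma Tileable.translate {S : Set Cell} (v : Cell) (h : Tileable S) : Tileable (trf v '' S) := by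
  obtain ⟨P, hP1, hP2, hP3⟩ := h
  refine ⟨(Set.image (trf v)) '' P, ?_, ?_, ?_⟩
  · rintro p ⟨q, hq, rfl⟩
    exact isTromino_trf v (hP1 q hq)
  · rintro x ⟨p, hp, rfl⟩ y ⟨q, hq, rfl⟩ hxy
    have hpq : p ≠ q := fun e => hxy (by rw [e])
    exact (Set.disjoint_image_iff (trf_injective v)).mpr (hP2 hp hq hpq)
  · rw [← Set.image_sUnion, hP3]

lemma trf_rect (a b m n : ℤ) :
    trf (a, b) '' rect m n = {c : Cell | 1 + a ≤ c.1 ∧ c.1 ≤ m + a ∧ 1 + b ≤ c.2 ∧ c.2 ≤ n + b} := by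
  ext ⟨x, y⟩
  simp only [Set.mem_image, Set.mem_setOf_eq, rect, trf, Prod.mk.injEq, Prod.exists]
  constructor
  · rintro ⟨u, w, ⟨h1, h2, h3, h4⟩, rfl, rfl⟩
    omega
  · rintro ⟨h1, h2, h3, h4⟩
    exact ⟨x - a, y - b, by omega, by omega, by omega⟩

lemma tileable_rows_add {a b n : ℤ} (ha : 0 ≤ a) (hb : 0 ≤ b)
    (h1 : Tileable (rect a n)) (h2 : Tileable (rect b n)) : Tileable (rect (a + b) n) := by
  have h2' := h2.translate (a, 0)
  rw [trf_rect] at h2'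
  have heq : rect (a + b) n =
      rect a n ∪ {c : Cell | 1 + a ≤ c.1 ∧ c.1 ≤ b + a ∧ 1 + 0 ≤ c.2 ∧ c.2 ≤ n + 0} := by
    ext ⟨x, y⟩
    simp only [rect, Set.mem_union, Set.mem_setOf_eq]
    omega
  have hd : Disjoint (rect a n)
      {c : Cell | 1 + a ≤ c.1 ∧ c.1 ≤ b + a ∧ 1 + 0 ≤ c.2 ∧ c.2 ≤ n + 0} := by
    rw [Set.disjoint_left]
    rintro ⟨x, y⟩ h h'
    simp only [rect, Set.mem_setOf_eq] at h h'
    omega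
  rw [heq]
  exact h1.union h2' hd

lemma tileable_cols_add {a b m : ℤ} (ha : 0 ≤ a) (hb : 0 ≤ b)
    (h1 : Tileable (rect m a)) (h2 : Tileable (rect m b)) : Tileable (rect m (a + b)) := by
  have h2' := h2.translate (0, a)
  rw [trf_rect] at h2'
  have heq : rect m (a + b) =
      rect m a ∪ {c : Cell | 1 + 0 ≤ c.1 ∧ c.1 ≤ m + 0 ∧ 1 + a ≤ c.2 ∧ c.2 ≤ b + a} := by
    ext ⟨x, y⟩
    simp only [rect, Set.mem_union, Set.mem_setOf_eq]
    omega
  have hd : Disjoint (rect m a)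
      {c : Cell | 1 + 0 ≤ c.1 ∧ c.1 ≤ m + 0 ∧ 1 + a ≤ c.2 ∧ c.2 ≤ b + a} := by
    rw [Set.disjoint_left]
    rintro ⟨x, y⟩ h h'
    simp only [rect, Set.mem_setOf_eq] at h h'
    omega
  rw [heq]
  exact h1.union h2' hd

lemma rect_empty_of_nonpos {m n : ℤ} (h : m ≤ 0 ∨ n ≤ 0) : rect m n = ∅ := by
  ext ⟨x, y⟩
  simp only [rect, Set.mem_setOf_eq, Set.mem_empty_iff_false, iff_false]
  omega

lemma tileable_rows_mul {a n : ℤ} (ha : 0 ≤ a) (h : Tileable (rect a n)) (k : ℕ) :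
    Tileable (rect (k * a) n) := by
  induction k with
  | zero => rw [show ((0 : ℕ) : ℤ) * a = 0 by simp, rect_empty_of_nonpos (Or.inl le_rfl)]
            exact tileable_empty
  | succ k ih =>
      have : ((k + 1 : ℕ) : ℤ) * a = (k : ℤ) * a + a := by push_cast; ring
      rw [this]
      exact tileable_rows_add (by positivity) ha ih h

lemma tileable_cols_mul {a m : ℤ} (ha : 0 ≤ a) (h : Tileable (rect m a)) (k : ℕ) :
    Tileable (rect m (k * a)) := by
  induction k with
  | zero => rw [show ((0 : ℕ) : ℤ) * a = 0 by simp, rect_empty_of_nonpos (Or.inr le_rfl)]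
            exact tileable_empty
  | succ k ih =>
      have : ((k + 1 : ℕ) : ℤ) * a = (k : ℤ) * a + a := by push_cast; ring
      rw [this]
      exact tileable_cols_add (by positivity) ha ih h

end Translate

def box (r c m n : ℤ) : Set Cell :=
  {p : Cell | r + 1 ≤ p.1 ∧ p.1 ≤ r + m ∧ c + 1 ≤ p.2 ∧ p.2 ≤ c + n}


lemma tileable_box (r c : ℤ) {m n : ℤ} (h : Tileable (rect m n)) :
    Tileable (box r c m n) := by
  have h' := h.translate (r, c)
  rw [trf_rect] at h'
  have e : box r c m n =
      {p : Cell | 1 + r ≤ p.1 ∧ p.1 ≤ m + r ∧ 1 + c ≤ p.2 ∧ p.2 ≤ n + c} := by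
    ext ⟨x, y⟩
    simp only [box, Set.mem_setOf_eq]
    omega
  rw [e]
  exact h'


lemma tile_5_9 : Tileable (rect 5 9) := by
  have e : rect 5 9 = (box 0 0 2 3) ∪ (({(1,4),(1,5),(2,5)} : Set Cell)) ∪ (box 0 5 3 2) ∪ (box 0 7 3 2) ∪ (({(3,3),(2,4),(3,4)} : Set Cell)) ∪ (box 2 0 3 2) ∪ (({(4,4),(3,5),(4,5)} : Set Cell)) ∪ (({(4,3),(5,3),(5,4)} : Set Cell)) ∪ (({(5,5),(4,6),(5,6)} : Set Cell)) ∪ (box 3 6 2 3) := by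
    ext ⟨x,y⟩
    simp only [box, rect, Set.mem_union, Set.mem_setOf_eq, Set.mem_insert_iff, Set.mem_singleton_iff, Prod.mk.injEq]
    constructor
    · rintro ⟨h1, h2, h3, h4⟩
      interval_cases x <;> interval_cases y <;> simp
    · intro h
      omega
  rw [e]
  have h0 : Tileable (box 0 0 2 3) := tileable_box 0 0 tile_2_3
  have h1 : Tileable (({(1,4),(1,5),(2,5)} : Set Cell)) := tileable_of_tromino
    ⟨1, 4, (2,4), by simp, by ext ⟨x,y⟩; simp only [Set.mem_insert_iff, Set.mem_singleton_iff, Set.mem_diff, Prod.mk.injEq]; omega⟩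
  have h2 : Tileable (box 0 5 3 2) := tileable_box 0 5 tile_3_2
  have h3 : Tileable (box 0 7 3 2) := tileable_box 0 7 tile_3_2
  have h4 : Tileable (({(3,3),(2,4),(3,4)} : Set Cell)) := tileable_of_tromino
    ⟨2, 3, (2,3), by simp, by ext ⟨x,y⟩; simp only [Set.mem_insert_iff, Set.mem_singleton_iff, Set.mem_diff, Prod.mk.injEq]; omega⟩
  have h5 : Tileable (box 2 0 3 2) := tileable_box 2 0 tile_3_2
  have h6 : Tileable (({(4,4),(3,5),(4,5)} : Set Cell)) := tileable_of_tromino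
    ⟨3, 4, (3,4), by simp, by ext ⟨x,y⟩; simp only [Set.mem_insert_iff, Set.mem_singleton_iff, Set.mem_diff, Prod.mk.injEq]; omega⟩
  have h7 : Tileable (({(4,3),(5,3),(5,4)} : Set Cell)) := tileable_of_tromino
    ⟨4, 3, (4,4), by simp, by ext ⟨x,y⟩; simp only [Set.mem_insert_iff, Set.mem_singleton_iff, Set.mem_diff, Prod.mk.injEq]; omega⟩
  have h8 : Tileable (({(5,5),(4,6),(5,6)} : Set Cell)) := tileable_of_tromino
    ⟨4, 5, (4,5), by simp, by ext ⟨x,y⟩; simp only [Set.mem_insert_iff, Set.mem_singleton_iff, Set.mem_diff, Prod.mk.injEq]; omega⟩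
  have h9 : Tileable (box 3 6 2 3) := tileable_box 3 6 tile_2_3
  refine Tileable.union ?_ h9 (by rw [Set.disjoint_left]; rintro ⟨x,y⟩ hu hv; simp only [box, rect, Set.mem_union, Set.mem_setOf_eq, Set.mem_insert_iff, Set.mem_singleton_iff, Prod.mk.injEq] at hu hv; omega)
  refine Tileable.union ?_ h8 (by rw [Set.disjoint_left]; rintro ⟨x,y⟩ hu hv; simp only [box, rect, Set.mem_union, Set.mem_setOf_eq, Set.mem_insert_iff, Set.mem_singleton_iff, Prod.mk.injEq] at hu hv; omega)
  refine Tileable.union ?_ h7 (by rw [Set.disjoint_left]; rintro ⟨x,y⟩ hu hv; simp only [box, rect, Set.mem_union, Set.mem_setOf_eq, Set.mem_insert_iff, Set.mem_singleton_iff, Prod.mk.injEq] at hu hv; omega)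
  refine Tileable.union ?_ h6 (by rw [Set.disjoint_left]; rintro ⟨x,y⟩ hu hv; simp only [box, rect, Set.mem_union, Set.mem_setOf_eq, Set.mem_insert_iff, Set.mem_singleton_iff, Prod.mk.injEq] at hu hv; omega)
  refine Tileable.union ?_ h5 (by rw [Set.disjoint_left]; rintro ⟨x,y⟩ hu hv; simp only [box, rect, Set.mem_union, Set.mem_setOf_eq, Set.mem_insert_iff, Set.mem_singleton_iff, Prod.mk.injEq] at hu hv; omega)
  refine Tileable.union ?_ h4 (by rw [Set.disjoint_left]; rintro ⟨x,y⟩ hu hv; simp only [box, rect, Set.mem_union, Set.mem_setOf_eq, Set.mem_insert_iff, Set.mem_singleton_iff, Prod.mk.injEq] at hu hv; omega)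
  refine Tileable.union ?_ h3 (by rw [Set.disjoint_left]; rintro ⟨x,y⟩ hu hv; simp only [box, rect, Set.mem_union, Set.mem_setOf_eq, Set.mem_insert_iff, Set.mem_singleton_iff, Prod.mk.injEq] at hu hv; omega)
  refine Tileable.union ?_ h2 (by rw [Set.disjoint_left]; rintro ⟨x,y⟩ hu hv; simp only [box, rect, Set.mem_union, Set.mem_setOf_eq, Set.mem_insert_iff, Set.mem_singleton_iff, Prod.mk.injEq] at hu hv; omega)
  refine Tileable.union ?_ h1 (by rw [Set.disjoint_left]; rintro ⟨x,y⟩ hu hv; simp only [box, rect, Set.mem_union, Set.mem_setOf_eq, Set.mem_insert_iff, Set.mem_singleton_iff, Prod.mk.injEq] at hu hv; omega)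
  exact h0

lemma tile_9_5 : Tileable (rect 9 5) := by
  have e : rect 9 5 = (box 0 0 2 3) ∪ (box 0 3 3 2) ∪ (box 2 0 2 3) ∪ (({(4,4),(4,5),(5,5)} : Set Cell)) ∪ (box 4 0 3 2) ∪ (({(5,3),(6,3),(5,4)} : Set Cell)) ∪ (({(6,4),(6,5),(7,5)} : Set Cell)) ∪ (({(7,3),(7,4),(8,4)} : Set Cell)) ∪ (box 7 0 2 3) ∪ (({(9,4),(8,5),(9,5)} : Set Cell)) := by
    ext ⟨x,y⟩
    simp only [box, rect, Set.mem_union, Set.mem_setOf_eq, Set.mem_insert_iff, Set.mem_singleton_iff, Prod.mk.injEq]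
    constructor
    · rintro ⟨h1, h2, h3, h4⟩
      interval_cases x <;> interval_cases y <;> simp
    · intro h
      omega
  rw [e]
  have h0 : Tileable (box 0 0 2 3) := tileable_box 0 0 tile_2_3
  have h1 : Tileable (box 0 3 3 2) := tileable_box 0 3 tile_3_2
  have h2 : Tileable (box 2 0 2 3) := tileable_box 2 0 tile_2_3
  have h3 : Tileable (({(4,4),(4,5),(5,5)} : Set Cell)) := tileable_of_tromino
    ⟨4, 4, (5,4), by simp, by ext ⟨x,y⟩; simp only [Set.mem_insert_iff, Set.mem_singleton_iff, Set.mem_diff, Prod.mk.injEq]; omega⟩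
  have h4 : Tileable (box 4 0 3 2) := tileable_box 4 0 tile_3_2
  have h5 : Tileable (({(5,3),(6,3),(5,4)} : Set Cell)) := tileable_of_tromino
    ⟨5, 3, (6,4), by simp, by ext ⟨x,y⟩; simp only [Set.mem_insert_iff, Set.mem_singleton_iff, Set.mem_diff, Prod.mk.injEq]; omega⟩
  have h6 : Tileable (({(6,4),(6,5),(7,5)} : Set Cell)) := tileable_of_tromino
    ⟨6, 4, (7,4), by simp, by ext ⟨x,y⟩; simp only [Set.mem_insert_iff, Set.mem_singleton_iff, Set.mem_diff, Prod.mk.injEq]; omega⟩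
  have h7 : Tileable (({(7,3),(7,4),(8,4)} : Set Cell)) := tileable_of_tromino
    ⟨7, 3, (8,3), by simp, by ext ⟨x,y⟩; simp only [Set.mem_insert_iff, Set.mem_singleton_iff, Set.mem_diff, Prod.mk.injEq]; omega⟩
  have h8 : Tileable (box 7 0 2 3) := tileable_box 7 0 tile_2_3
  have h9 : Tileable (({(9,4),(8,5),(9,5)} : Set Cell)) := tileable_of_tromino
    ⟨8, 4, (8,4), by simp, by ext ⟨x,y⟩; simp only [Set.mem_insert_iff, Set.mem_singleton_iff, Set.mem_diff, Prod.mk.injEq]; omega⟩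
  refine Tileable.union ?_ h9 (by rw [Set.disjoint_left]; rintro ⟨x,y⟩ hu hv; simp only [box, rect, Set.mem_union, Set.mem_setOf_eq, Set.mem_insert_iff, Set.mem_singleton_iff, Prod.mk.injEq] at hu hv; omega)
  refine Tileable.union ?_ h8 (by rw [Set.disjoint_left]; rintro ⟨x,y⟩ hu hv; simp only [box, rect, Set.mem_union, Set.mem_setOf_eq, Set.mem_insert_iff, Set.mem_singleton_iff, Prod.mk.injEq] at hu hv; omega)
  refine Tileable.union ?_ h7 (by rw [Set.disjoint_left]; rintro ⟨x,y⟩ hu hv; simp only [box, rect, Set.mem_union, Set.mem_setOf_eq, Set.mem_insert_iff, Set.mem_singleton_iff, Prod.mk.injEq] at hu hv; omega)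
  refine Tileable.union ?_ h6 (by rw [Set.disjoint_left]; rintro ⟨x,y⟩ hu hv; simp only [box, rect, Set.mem_union, Set.mem_setOf_eq, Set.mem_insert_iff, Set.mem_singleton_iff, Prod.mk.injEq] at hu hv; omega)
  refine Tileable.union ?_ h5 (by rw [Set.disjoint_left]; rintro ⟨x,y⟩ hu hv; simp only [box, rect, Set.mem_union, Set.mem_setOf_eq, Set.mem_insert_iff, Set.mem_singleton_iff, Prod.mk.injEq] at hu hv; omega)
  refine Tileable.union ?_ h4 (by rw [Set.disjoint_left]; rintro ⟨x,y⟩ hu hv; simp only [box, rect, Set.mem_union, Set.mem_setOf_eq, Set.mem_insert_iff, Set.mem_singleton_iff, Prod.mk.injEq] at hu hv; omega)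
  refine Tileable.union ?_ h3 (by rw [Set.disjoint_left]; rintro ⟨x,y⟩ hu hv; simp only [box, rect, Set.mem_union, Set.mem_setOf_eq, Set.mem_insert_iff, Set.mem_singleton_iff, Prod.mk.injEq] at hu hv; omega)
  refine Tileable.union ?_ h2 (by rw [Set.disjoint_left]; rintro ⟨x,y⟩ hu hv; simp only [box, rect, Set.mem_union, Set.mem_setOf_eq, Set.mem_insert_iff, Set.mem_singleton_iff, Prod.mk.injEq] at hu hv; omega)
  refine Tileable.union ?_ h1 (by rw [Set.disjoint_left]; rintro ⟨x,y⟩ hu hv; simp only [box, rect, Set.mem_union, Set.mem_setOf_eq, Set.mem_insert_iff, Set.mem_singleton_iff, Prod.mk.injEq] at hu hv; omega)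
  exact h0


section Construct

lemma tileA {m n : ℤ} (hm : 0 ≤ m) (hn : 0 ≤ n) (h2 : 2 ∣ m) (h3 : 3 ∣ n) :
    Tileable (rect m n) := by
  obtain ⟨t, ht⟩ : ∃ t : ℕ, n = (t : ℤ) * 3 := ⟨(n / 3).toNat, by omega⟩
  obtain ⟨s, hs⟩ : ∃ s : ℕ, m = (s : ℤ) * 2 := ⟨(m / 2).toNat, by omega⟩
  subst ht hs
  exact tileable_rows_mul (by norm_num) (tileable_cols_mul (by norm_num) tile_2_3 t) s

lemma tileB {m n : ℤ} (hm : 0 ≤ m) (hn : 0 ≤ n) (h3 : 3 ∣ m) (h2 : 2 ∣ n) :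
    Tileable (rect m n) := by
  obtain ⟨t, ht⟩ : ∃ t : ℕ, n = (t : ℤ) * 2 := ⟨(n / 2).toNat, by omega⟩
  obtain ⟨s, hs⟩ : ∃ s : ℕ, m = (s : ℤ) * 3 := ⟨(m / 3).toNat, by omega⟩
  subst ht hs
  exact tileable_rows_mul (by norm_num) (tileable_cols_mul (by norm_num) tile_3_2 t) s

lemma tile_5_6 : Tileable (rect 5 6) := by
  rw [show (5 : ℤ) = 2 + 3 by norm_num]
  exact tileable_rows_add (by norm_num) (by norm_num)
    (tileA (by norm_num) (by norm_num) (by norm_num) (by norm_num))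
    (tileB (by norm_num) (by norm_num) (by norm_num) (by norm_num))

lemma tile_5_n {n : ℤ} (h3 : 3 ∣ n) (hn : 5 ≤ n) : Tileable (rect 5 n) := by
  rcases Int.even_or_odd n with he | ho
  · obtain ⟨r, hr⟩ := he
    obtain ⟨t, ht⟩ : ∃ t : ℕ, n = (t : ℤ) * 6 := ⟨(n / 6).toNat, by omega⟩
    subst ht
    exact tileable_cols_mul (by norm_num) tile_5_6 t
  · obtain ⟨r, hr⟩ := ho
    obtain ⟨t, ht⟩ : ∃ t : ℕ, n = 9 + (t : ℤ) * 6 := ⟨((n - 9) / 6).toNat, by omega⟩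
    subst ht
    exact tileable_cols_add (by norm_num) (by positivity) tile_5_9
      (tileable_cols_mul (by norm_num) tile_5_6 t)

lemma tile_6_odd {n : ℤ} (hn : 3 ≤ n) (ho : Odd n) : Tileable (rect 6 n) := by
  obtain ⟨r, hr⟩ := ho
  rw [show n = 3 + (n - 3) by ring]
  exact tileable_cols_add (by norm_num) (by omega)
    (tileA (by norm_num) (by norm_num) (by norm_num) (by norm_num))
    (tileB (by norm_num) (by omega) (by norm_num) (by omega))

lemma tile_9_odd {n : ℤ} (hn : 9 ≤ n) (ho : Odd n) : Tileable (rect 9 n) := by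
  obtain ⟨r, hr⟩ := ho
  rw [show n = 5 + (n - 5) by ring]
  exact tileable_cols_add (by norm_num) (by omega) tile_9_5
    (tileB (by norm_num) (by omega) (by norm_num) (by omega))

lemma tileC {m n : ℤ} (h3 : 3 ∣ m) (hm : 6 ≤ m) (ho : Odd n) (hmn : m ≤ n) :
    Tileable (rect m n) := by
  rcases Int.even_or_odd m with he | hom
  · obtain ⟨r, hr⟩ := he
    obtain ⟨s, hs⟩ : ∃ s : ℕ, m = (s : ℤ) * 6 := ⟨(m / 6).toNat, by omega⟩
    subst hs
    exact tileable_rows_mul (by norm_num) (tile_6_odd (by omega) ho) s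
  · obtain ⟨r, hr⟩ := hom
    obtain ⟨s, hs⟩ : ∃ s : ℕ, m = 9 + (s : ℤ) * 6 := ⟨((m - 9) / 6).toNat, by omega⟩
    have h9 : Tileable (rect 9 n) := tile_9_odd (by omega) ho
    have h6 : Tileable (rect ((s : ℤ) * 6) n) :=
      tileable_rows_mul (by norm_num) (tile_6_odd (by omega) ho) s
    rw [hs]
    exact tileable_rows_add (by norm_num) (by positivity) h9 h6

lemma tileD {m n : ℤ} (hom : Odd m) (hm : 5 ≤ m) (h3 : 3 ∣ n) (hmn : m ≤ n) :
    Tileable (rect m n) := by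
  obtain ⟨r, hr⟩ := hom
  rw [show m = 5 + (m - 5) by ring]
  exact tileable_rows_add (by norm_num) (by omega)
    (tile_5_n h3 (by omega))
    (tileA (by omega) (by omega) (by omega) h3)

end Construct


section Counting

lemma tromino_three {p : Set Cell} (h : IsTromino p) :
    ∃ a b c : Cell, a ≠ b ∧ a ≠ c ∧ b ≠ c ∧ p = {a, b, c} := by
  obtain ⟨i, j, c, hc, rfl⟩ := h
  simp only [Set.mem_insert_iff, Set.mem_singleton_iff] at hc
  rcases hc with rfl | rfl | rfl | rfl
  · exact ⟨(i + 1, j), (i, j + 1), (i + 1, j + 1),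
      by simp only [ne_eq, Prod.mk.injEq]; omega,
      by simp only [ne_eq, Prod.mk.injEq]; omega,
      by simp only [ne_eq, Prod.mk.injEq]; omega,
      by ext ⟨x, y⟩; simp only [Set.mem_insert_iff, Set.mem_singleton_iff, Set.mem_diff,
        Prod.mk.injEq]; omega⟩
  · exact ⟨(i, j), (i, j + 1), (i + 1, j + 1),
      by simp only [ne_eq, Prod.mk.injEq]; omega,
      by simp only [ne_eq, Prod.mk.injEq]; omega,
      by simp only [ne_eq, Prod.mk.injEq]; omega,
      by ext ⟨x, y⟩; simp only [Set.mem_insert_iff, Set.mem_singleton_iff, Set.mem_diff,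
        Prod.mk.injEq]; omega⟩
  · exact ⟨(i, j), (i + 1, j), (i + 1, j + 1),
      by simp only [ne_eq, Prod.mk.injEq]; omega,
      by simp only [ne_eq, Prod.mk.injEq]; omega,
      by simp only [ne_eq, Prod.mk.injEq]; omega,
      by ext ⟨x, y⟩; simp only [Set.mem_insert_iff, Set.mem_singleton_iff, Set.mem_diff,
        Prod.mk.injEq]; omega⟩
  · exact ⟨(i, j), (i + 1, j), (i, j + 1),
      by simp only [ne_eq, Prod.mk.injEq]; omega,
      by simp only [ne_eq, Prod.mk.injEq]; omega,
      by simp only [ne_eq, Prod.mk.injEq]; omega,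
      by ext ⟨x, y⟩; simp only [Set.mem_insert_iff, Set.mem_singleton_iff, Set.mem_diff,
        Prod.mk.injEq]; omega⟩

lemma tromino_marked {p : Set Cell} (h : IsTromino p) {c1 c2 : Cell}
    (h1 : c1 ∈ p) (h2 : c2 ∈ p) (m1 : c1.1 = 1 ∨ c1.1 = 3) (m2 : c2.1 = 1 ∨ c2.1 = 3)
    (o1 : Odd c1.2) (o2 : Odd c2.2) : c1 = c2 := by
  obtain ⟨i, j, c, hc, rfl⟩ := h
  obtain ⟨a, ha⟩ := o1
  obtain ⟨b, hb⟩ := o2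
  have e1 := h1.1
  have e2 := h2.1
  simp only [Set.mem_insert_iff, Set.mem_singleton_iff, Prod.ext_iff] at e1 e2
  have : c1.1 = c2.1 ∧ c1.2 = c2.2 := by omega
  exact Prod.ext_iff.mpr this

lemma not_tileable_3_odd {n : ℤ} (hn3 : 3 ≤ n) (ho : Odd n) : ¬Tileable (rect 3 n) := by
  rintro ⟨P, hP, hdisj, hU⟩
  classical
  obtain ⟨K, hK⟩ : ∃ K : ℕ, n = 2 * (K : ℤ) + 1 := by
    obtain ⟨r, hr⟩ := ho; exact ⟨(n / 2).toNat, by omega⟩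
  set RF : Finset Cell := Finset.Icc (1 : ℤ) 3 ×ˢ Finset.Icc (1 : ℤ) n with hRF
  have hSco : rect 3 n = ↑RF := by
    ext ⟨x, y⟩
    simp only [hRF, rect, Set.mem_setOf_eq, Finset.coe_product, Set.mem_prod, Finset.coe_Icc,
      Set.mem_Icc]
    omega
  have hSfin : (rect 3 n).Finite := by rw [hSco]; exact RF.finite_toSet
  have hPsub : ∀ p ∈ P, p ⊆ rect 3 n := by
    intro p hp
    rw [← hU]
    exact Set.subset_sUnion_of_mem hp
  have hPfin : P.Finite := Set.Finite.subset hSfin.finite_subsets (fun p hp => hPsub p hp)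
  set PF : Finset (Set Cell) := hPfin.toFinset with hPF
  set F : Set Cell → Finset Cell := fun p => RF.filter (· ∈ p) with hF
  have hFco : ∀ p ∈ P, (F p : Set Cell) = p := by
    intro p hp
    ext c
    simp only [hF, Finset.coe_filter, Set.mem_setOf_eq]
    constructor
    · rintro ⟨-, h⟩; exact h
    · intro h
      refine ⟨?_, h⟩
      have := hPsub p hp h
      rw [hSco] at this
      exact this
  have hFcard : ∀ p ∈ P, (F p).card = 3 := by
    intro p hp
    obtain ⟨a, b, c, hab, hac, hbc, hpe⟩ := tromino_three (hP p hp)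
    have he : F p = {a, b, c} := by
      apply Finset.coe_injective
      rw [hFco p hp, hpe]
      simp
    rw [he, Finset.card_insert_of_notMem (by simp [hab, hac]),
      Finset.card_insert_of_notMem (by simp [hbc]), Finset.card_singleton]
  have hbiU : PF.biUnion F = RF := by
    ext c
    simp only [Finset.mem_biUnion, hPF, Set.Finite.mem_toFinset, hF, Finset.mem_filter]
    constructor
    · rintro ⟨p, hp, hcR, -⟩; exact hcR
    · intro hc
      have hcS : (c : Cell) ∈ rect 3 n := by rw [hSco]; exact hc
      rw [← hU] at hcS
      obtain ⟨p, hp, hcp⟩ := hcS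
      exact ⟨p, hp, hc, hcp⟩
  have hdisjF : ∀ p ∈ PF, ∀ q ∈ PF, p ≠ q → Disjoint (F p) (F q) := by
    intro p hp q hq hpq
    rw [Finset.disjoint_left]
    intro c hcp hcq
    simp only [hF, Finset.mem_filter] at hcp hcq
    have hd := hdisj (hPfin.mem_toFinset.mp hp) (hPfin.mem_toFinset.mp hq) hpq
    exact (Set.disjoint_left.mp hd hcp.2) hcq.2
  have hRFcard : RF.card = 3 * (2 * K + 1) := by
    rw [hRF, Finset.card_product, Int.card_Icc, Int.card_Icc,
      show ((3 : ℤ) + 1 - 1).toNat = 3 from rfl,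
      show (n + 1 - 1).toNat = 2 * K + 1 from by omega]
  have hPFsum : RF.card = 3 * PF.card := by
    rw [← hbiU, Finset.card_biUnion hdisjF,
      Finset.sum_congr rfl (fun p hp => hFcard p (hPfin.mem_toFinset.mp hp)),
      Finset.sum_const, smul_eq_mul, mul_comm]
  set MF : Finset Cell :=
      ((Finset.Icc (0 : ℤ) (K : ℤ)).image (fun t => ((1 : ℤ), 2 * t + 1))) ∪
      ((Finset.Icc (0 : ℤ) (K : ℤ)).image (fun t => ((3 : ℤ), 2 * t + 1))) with hMF
  have hMFdisj : Disjoint ((Finset.Icc (0 : ℤ) (K : ℤ)).image (fun t => ((1 : ℤ), 2 * t + 1)))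
      ((Finset.Icc (0 : ℤ) (K : ℤ)).image (fun t => ((3 : ℤ), 2 * t + 1))) := by
    rw [Finset.disjoint_left]
    rintro c hc1 hc3
    simp only [Finset.mem_image] at hc1 hc3
    obtain ⟨a, -, rfl⟩ := hc1
    obtain ⟨b, -, hb⟩ := hc3
    simp only [Prod.mk.injEq] at hb
    omega
  have hMFcard : MF.card = 2 * K + 2 := by
    rw [hMF, Finset.card_union_of_disjoint hMFdisj,
      Finset.card_image_of_injective _ (by intro a b h; simp only [Prod.mk.injEq] at h; omega),
      Finset.card_image_of_injective _ (by intro a b h; simp only [Prod.mk.injEq] at h; omega),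
      Int.card_Icc]
    omega
  have hMFmem : ∀ c ∈ MF, (c.1 = 1 ∨ c.1 = 3) ∧ ∃ t : ℤ, 0 ≤ t ∧ t ≤ K ∧ c.2 = 2 * t + 1 := by
    intro c hc
    simp only [hMF, Finset.mem_union, Finset.mem_image, Finset.mem_Icc] at hc
    rcases hc with ⟨t, ht, rfl⟩ | ⟨t, ht, rfl⟩
    · exact ⟨Or.inl rfl, t, ht.1, ht.2, rfl⟩
    · exact ⟨Or.inr rfl, t, ht.1, ht.2, rfl⟩
  have hpick : ∀ c ∈ MF, ∃ p, p ∈ P ∧ c ∈ p := by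
    intro c hc
    obtain ⟨h13, t, ht0, htK, hct⟩ := hMFmem c hc
    have hcS : c ∈ rect 3 n := by
      simp only [rect, Set.mem_setOf_eq]
      omega
    rw [← hU] at hcS
    exact hcS
  set f : Cell → Set Cell := fun c => if h : ∃ p, p ∈ P ∧ c ∈ p then h.choose else ∅ with hf
  have hfP : ∀ c ∈ MF, f c ∈ P ∧ c ∈ f c := by
    intro c hc
    have h := hpick c hc
    simp only [hf, dif_pos h]
    exact ⟨h.choose_spec.1, h.choose_spec.2⟩
  have hcard_le : MF.card ≤ PF.card := by
    apply Finset.card_le_card_of_injOn f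
      (fun c hc => hPfin.mem_toFinset.mpr (hfP c hc).1)
    intro c1 h1 c2 h2 he
    have h1' : c1 ∈ MF := h1
    have h2' : c2 ∈ MF := h2
    obtain ⟨m1, t1, ht10, ht1K, hc1⟩ := hMFmem c1 h1'
    obtain ⟨m2, t2, ht20, ht2K, hc2⟩ := hMFmem c2 h2'
    have hp := (hfP c1 h1').1
    have e1 := (hfP c1 h1').2
    have e2 := (hfP c2 h2').2
    rw [← he] at e2
    exact tromino_marked (hP _ hp) e1 e2 m1 m2 ⟨t1, by omega⟩ ⟨t2, by omega⟩
  omega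

end Counting

/-- Chu–Johnsonbaugh Theorem. -/
theorem chu_johnsonbaugh (m n : ℤ) (hm : 2 ≤ m) (hmn : m ≤ n) (hdvd : 3 ∣ m * n) :
    Tileable (rect m n) ↔ ¬(m = 3 ∧ Odd n) := by
  constructor
  · rintro ht ⟨rfl, hon⟩
    exact not_tileable_3_odd hmn hon ht
  · intro hne
    have h3 : (3 : ℤ) ∣ m ∨ (3 : ℤ) ∣ n := Int.prime_three.2.2 m n hdvd
    rcases Int.even_or_odd n with hen | hon
    · obtain ⟨r, hr⟩ := hen
      rcases h3 with h | h
      · exact tileB (by omega) (by omega) h (by omega)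
      · rcases Int.even_or_odd m with hem | hom
        · obtain ⟨s, hs⟩ := hem
          exact tileA (by omega) (by omega) (by omega) h
        · obtain ⟨s, hs⟩ := hom
          by_cases h3m : (3 : ℤ) ∣ m
          · exact tileB (by omega) (by omega) h3m (by omega)
          · exact tileD ⟨s, hs⟩ (by omega) h hmn
    · rcases h3 with h | h
      · obtain ⟨r, hr⟩ := hon
        have hm3 : m ≠ 3 := fun e => hne ⟨e, ⟨r, hr⟩⟩
        exact tileC h (by omega) ⟨r, hr⟩ hmn
      · rcases Int.even_or_odd m with hem | hom
        · obtain ⟨s, hs⟩ := hem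
          exact tileA (by omega) (by omega) (by omega) h
        · obtain ⟨s, hs⟩ := hom
          by_cases h3m : (3 : ℤ) ∣ m
          · obtain ⟨r, hr⟩ := hon
            have hm3 : m ≠ 3 := fun e => hne ⟨e, ⟨r, hr⟩⟩
            exact tileC h3m (by omega) ⟨r, hr⟩ hmn
          · exact tileD ⟨s, hs⟩ (by omega) h hmn
end

section
/- For every integer t ≥ 1, the number of tromino tilings of the rectangle R(2,3t) equals 2^t. -/
-- translation
def shc (k : ℤ) (c : Cell) : Cell := (c.1, c.2 + k)

lemma shc_inj (k : ℤ) : Function.Injective (shc k) := by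
  rintro ⟨a, b⟩ ⟨a', b'⟩ h
  simp [shc, Prod.ext_iff] at h ⊢
  omega

lemma mem_shc_image {k : ℤ} {S : Set Cell} {c : Cell} :
    c ∈ shc k '' S ↔ (c.1, c.2 - k) ∈ S := by
  constructor
  · rintro ⟨⟨x1, x2⟩, hx, rfl⟩; simpa [shc] using hx
  · intro h; exact ⟨(c.1, c.2 - k), h, by simp [shc]⟩

lemma shc_shc (k : ℤ) (S : Set Cell) : shc (-k) '' (shc k '' S) = S := by
  ext ⟨a, b⟩
  simp only [mem_shc_image]
  norm_num

lemma shc_shc2 (k : ℤ) (P : Set (Set Cell)) :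
    Set.image (shc (-k)) '' (Set.image (shc k) '' P) = P := by
  rw [← Set.image_comp]
  have h : Set.image (shc (-k)) ∘ Set.image (shc k) = id := by
    funext S; simp [Function.comp, shc_shc]
  rw [h, Set.image_id]

def blk (i j : ℤ) : Set Cell := {(i, j), (i + 1, j), (i, j + 1), (i + 1, j + 1)}

lemma image_blk (k i j : ℤ) : shc k '' blk i j = blk i (j + k) := by
  have h : j + 1 + k = j + k + 1 := by ring
  simp [blk, Set.image_insert_eq, Set.image_singleton, shc, h]

lemma tromino_nonempty {T : Set Cell} (h : IsTromino T) : T.Nonempty := by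
  obtain ⟨i, j, ⟨c1, c2⟩, hc, hT⟩ := h
  subst hT
  rcases eq_or_ne ((c1, c2) : Cell) (i, j) with h1 | h1
  · exact ⟨(i + 1, j), by simp, by simp [h1, Prod.ext_iff]⟩
  · exact ⟨(i, j), by simp, by simpa using h1.symm⟩

lemma tromino_image (k : ℤ) {T : Set Cell} (h : IsTromino T) : IsTromino (shc k '' T) := by
  obtain ⟨i, j, c, hc, hT⟩ := h
  refine ⟨i, j + k, shc k c, ?_, ?_⟩
  · have : shc k c ∈ shc k '' blk i j := Set.mem_image_of_mem _ hc
    rwa [image_blk] at this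
  · show shc k '' T = blk i (j + k) \ {shc k c}
    rw [hT, show ({(i, j), (i + 1, j), (i, j + 1), (i + 1, j + 1)} : Set Cell) = blk i j from rfl,
      Set.image_diff (shc_inj k), image_blk, Set.image_singleton]

lemma tiling_shift (k : ℤ) {P : Set (Set Cell)} {S : Set Cell}
    (h : IsTromTiling P S) : IsTromTiling (Set.image (shc k) '' P) (shc k '' S) := by
  obtain ⟨htrom, hdisj, hU⟩ := h
  refine ⟨?_, ?_, ?_⟩
  · rintro p ⟨q, hq, rfl⟩; exact tromino_image k (htrom q hq)
  · rintro a ⟨p, hp, rfl⟩ b ⟨q, hq, rfl⟩ hne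
    have hpq : p ≠ q := fun h => hne (by rw [h])
    exact (Set.disjoint_image_iff (shc_inj k)).mpr (hdisj hp hq hpq)
  · rw [← hU, Set.image_sUnion, Set.sUnion_image]

lemma tromino_shape {T : Set Cell} {n : ℤ} (h : IsTromino T) (hs : T ⊆ rect 2 n) :
    ∃ j c, c ∈ blk 1 j ∧ T = blk 1 j \ {c} ∧ 1 ≤ j ∧ j + 1 ≤ n := by
  obtain ⟨i, j, c, hc, hT⟩ := h
  have hrow1 : (i, j) ∈ T ∨ (i, j + 1) ∈ T := by
    rcases eq_or_ne c (i, j) with h1 | h1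
    · right; rw [hT]; exact ⟨by simp [blk], by simp [h1, Prod.ext_iff]⟩
    · left; rw [hT]; exact ⟨by simp [blk], by simpa using h1.symm⟩
  have hrow2 : (i + 1, j) ∈ T ∨ (i + 1, j + 1) ∈ T := by
    rcases eq_or_ne c (i + 1, j) with h1 | h1
    · right; rw [hT]; exact ⟨by simp [blk], by simp [h1, Prod.ext_iff]⟩
    · left; rw [hT]; exact ⟨by simp [blk], by simpa using h1.symm⟩
  have hcol1 : (i, j) ∈ T ∨ (i + 1, j) ∈ T := by
    rcases eq_or_ne c (i, j) with h1 | h1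
    · right; rw [hT]; exact ⟨by simp [blk], by simp [h1, Prod.ext_iff]⟩
    · left; rw [hT]; exact ⟨by simp [blk], by simpa using h1.symm⟩
  have hcol2 : (i, j + 1) ∈ T ∨ (i + 1, j + 1) ∈ T := by
    rcases eq_or_ne c (i, j + 1) with h1 | h1
    · right; rw [hT]; exact ⟨by simp [blk], by simp [h1, Prod.ext_iff]⟩
    · left; rw [hT]; exact ⟨by simp [blk], by simpa using h1.symm⟩
  have hi : i = 1 := by
    rcases hrow1 with h | h <;> rcases hrow2 with h' | h' <;>
      have := hs h <;> have := hs h' <;> simp [rect] at * <;> omega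
  have hj1 : 1 ≤ j := by
    rcases hcol1 with h | h <;> have := hs h <;> simp [rect] at this <;> omega
  have hj2 : j + 1 ≤ n := by
    rcases hcol2 with h | h <;> have := hs h <;> simp [rect] at this <;> omega
  exact ⟨j, c, by simpa [blk, hi] using hc, by simpa [blk, hi] using hT, hj1, hj2⟩

def A1 : Set Cell := {(1,1),(2,1),(1,2)}
def A2 : Set Cell := {(2,2),(1,3),(2,3)}
def B1 : Set Cell := {(1,1),(2,1),(2,2)}
def B2 : Set Cell := {(1,2),(1,3),(2,3)}
def Tbad : Set Cell := {(1,1),(1,2),(2,2)}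

lemma F1 {T : Set Cell} {n : ℤ} (h : IsTromino T) (hs : T ⊆ rect 2 n)
    (hm : ((1:ℤ),(1:ℤ)) ∈ T) : T = A1 ∨ T = Tbad ∨ T = B1 := by
  obtain ⟨j, ⟨c1, c2⟩, hc, hT, hj1, hj2⟩ := tromino_shape h hs
  subst hT
  simp [blk, Prod.ext_iff] at hc hm
  have hj : j = 1 := by omega
  subst hj
  have : (c1 = 2 ∧ c2 = 1) ∨ (c1 = 1 ∧ c2 = 2) ∨ (c1 = 2 ∧ c2 = 2) := by omega
  rcases this with ⟨h1, h2⟩ | ⟨h1, h2⟩ | ⟨h1, h2⟩ <;> subst h1 <;> subst h2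
  · right; left; ext ⟨a, b⟩; simp [blk, Tbad, Prod.ext_iff]; omega
  · right; right; ext ⟨a, b⟩; simp [blk, B1, Prod.ext_iff]; omega
  · left; ext ⟨a, b⟩; simp [blk, A1, Prod.ext_iff]; omega

lemma F2 {T : Set Cell} {n : ℤ} (h : IsTromino T) (hs : T ⊆ rect 2 n)
    (hm : ((2:ℤ),(2:ℤ)) ∈ T) (h11 : ((1:ℤ),(1:ℤ)) ∉ T) (h21 : ((2:ℤ),(1:ℤ)) ∉ T)
    (h12 : ((1:ℤ),(2:ℤ)) ∉ T) : T = A2 := by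
  obtain ⟨j, ⟨c1, c2⟩, hc, hT, hj1, hj2⟩ := tromino_shape h hs
  subst hT
  simp [blk, Prod.ext_iff] at hc hm h11 h21 h12
  ext ⟨a, b⟩; simp [blk, A2, Prod.ext_iff]; omega

lemma F3 {T : Set Cell} {n : ℤ} (h : IsTromino T) (hs : T ⊆ rect 2 n)
    (hm : ((1:ℤ),(2:ℤ)) ∈ T) (h11 : ((1:ℤ),(1:ℤ)) ∉ T) (h21 : ((2:ℤ),(1:ℤ)) ∉ T)
    (h22 : ((2:ℤ),(2:ℤ)) ∉ T) : T = B2 := by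
  obtain ⟨j, ⟨c1, c2⟩, hc, hT, hj1, hj2⟩ := tromino_shape h hs
  subst hT
  simp [blk, Prod.ext_iff] at hc hm h11 h21 h22
  ext ⟨a, b⟩; simp [blk, B2, Prod.ext_iff]; omega

lemma F4 {T : Set Cell} {n : ℤ} (h : IsTromino T) (hs : T ⊆ rect 2 n)
    (hm : ((2:ℤ),(1:ℤ)) ∈ T) (h11 : ((1:ℤ),(1:ℤ)) ∉ T) (h12 : ((1:ℤ),(2:ℤ)) ∉ T)
    (h22 : ((2:ℤ),(2:ℤ)) ∉ T) : False := by
  obtain ⟨j, ⟨c1, c2⟩, hc, hT, hj1, hj2⟩ := tromino_shape h hs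
  subst hT
  simp [blk, Prod.ext_iff] at hc hm h11 h12 h22
  omega

lemma tromA1 : IsTromino A1 := ⟨1, 1, (2, 2), by norm_num,
  by ext ⟨a, b⟩; simp [A1, Prod.ext_iff]; try omega⟩
lemma tromA2 : IsTromino A2 := ⟨1, 2, (1, 2), by norm_num,
  by ext ⟨a, b⟩; simp [A2, Prod.ext_iff]; try omega⟩
lemma tromB1 : IsTromino B1 := ⟨1, 1, (1, 2), by norm_num,
  by ext ⟨a, b⟩; simp [B1, Prod.ext_iff]; try omega⟩
lemma tromB2 : IsTromino B2 := ⟨1, 2, (2, 2), by norm_num,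
  by ext ⟨a, b⟩; simp [B2, Prod.ext_iff]; try omega⟩

lemma unionA : A1 ∪ A2 = rect 2 3 := by
  ext ⟨a, b⟩; simp [A1, A2, rect, Prod.ext_iff]; omega
lemma unionB : B1 ∪ B2 = rect 2 3 := by
  ext ⟨a, b⟩; simp [B1, B2, rect, Prod.ext_iff]; omega
lemma disjA : Disjoint A1 A2 := by
  rw [Set.disjoint_left]; rintro ⟨a, b⟩ h1 h2
  simp [A1, A2, Prod.ext_iff] at h1 h2; omega
lemma disjB : Disjoint B1 B2 := by
  rw [Set.disjoint_left]; rintro ⟨a, b⟩ h1 h2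
  simp [B1, B2, Prod.ext_iff] at h1 h2; omega
lemma A1_ne_A2 : A1 ≠ A2 := by
  intro h
  have := h ▸ (show ((1:ℤ),(1:ℤ)) ∈ A1 by simp [A1])
  simp [A2, Prod.ext_iff] at this
lemma B1_ne_B2 : B1 ≠ B2 := by
  intro h
  have := h ▸ (show ((1:ℤ),(1:ℤ)) ∈ B1 by simp [B1])
  simp [B2, Prod.ext_iff] at this
lemma A1_ne_B1 : A1 ≠ B1 := by
  intro h
  have := h ▸ (show ((1:ℤ),(2:ℤ)) ∈ A1 by simp [A1])
  simp [B1, Prod.ext_iff] at this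
lemma A1_ne_B2 : A1 ≠ B2 := by
  intro h
  have := h ▸ (show ((1:ℤ),(1:ℤ)) ∈ A1 by simp [A1])
  simp [B2, Prod.ext_iff] at this

lemma tail_eq (n : ℤ) : shc 3 '' rect 2 n = rect 2 (n + 3) \ rect 2 3 := by
  ext ⟨a, b⟩
  simp only [mem_shc_image, Set.mem_diff]
  simp [rect]
  omega

lemma remove_two {P : Set (Set Cell)} {X Y : Set Cell} {n : ℤ}
    (hP : IsTromTiling P (rect 2 n)) (hX : X ∈ P) (hY : Y ∈ P)
    (hXY : X ∪ Y = rect 2 3) :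
    IsTromTiling (P \ {X, Y}) (shc 3 '' rect 2 (n - 3)) := by
  obtain ⟨htrom, hdisj, hU⟩ := hP
  refine ⟨fun p hp => htrom p hp.1, hdisj.subset Set.diff_subset, ?_⟩
  rw [tail_eq]
  have hn3 : n - 3 + 3 = n := by ring
  rw [hn3, ← hXY, ← hU]
  ext x
  constructor
  · rintro ⟨p, ⟨hp, hpne⟩, hx⟩
    simp only [Set.mem_insert_iff, Set.mem_singleton_iff] at hpne
    push_neg at hpne
    refine ⟨⟨p, hp, hx⟩, ?_⟩
    rintro (hxX | hxY)
    · exact Set.disjoint_left.mp (hdisj hp hX hpne.1) hx hxX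
    · exact Set.disjoint_left.mp (hdisj hp hY hpne.2) hx hxY
  · rintro ⟨⟨p, hp, hx⟩, hnx⟩
    refine ⟨p, ⟨hp, ?_⟩, hx⟩
    simp only [Set.mem_insert_iff, Set.mem_singleton_iff]
    push_neg
    constructor
    · rintro rfl; exact hnx (Or.inl hx)
    · rintro rfl; exact hnx (Or.inr hx)

lemma add_two {Q : Set (Set Cell)} {X Y : Set Cell} {n : ℤ} (hn : 3 ≤ n)
    (hQ : IsTromTiling Q (shc 3 '' rect 2 (n - 3)))
    (hX : IsTromino X) (hY : IsTromino Y) (hXY : X ∪ Y = rect 2 3)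
    (hd : Disjoint X Y) :
    IsTromTiling (insert X (insert Y Q)) (rect 2 n) := by
  obtain ⟨htrom, hdisj, hU⟩ := hQ
  have hq3 : ∀ q ∈ Q, ∀ Z : Set Cell, Z ⊆ rect 2 3 → Disjoint Z q := by
    intro q hq Z hZ
    rw [Set.disjoint_left]
    intro c hcZ hcq
    have h1 : c ∈ shc 3 '' rect 2 (n - 3) := hU ▸ ⟨q, hq, hcq⟩
    have h2 := hZ hcZ
    obtain ⟨a, b⟩ := c
    rw [mem_shc_image] at h1
    simp [rect] at h1 h2
    omega
  refine ⟨?_, ?_, ?_⟩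
  · rintro p hp
    rcases hp with rfl | rfl | hp
    · exact hX
    · exact hY
    · exact htrom p hp
  · refine Set.PairwiseDisjoint.insert (Set.PairwiseDisjoint.insert hdisj ?_) ?_
    · intro q hq _
      exact hq3 q hq Y (hXY ▸ Set.subset_union_right)
    · rintro q (rfl | hq) hne
      · exact hd
      · exact hq3 q hq X (hXY ▸ Set.subset_union_left)
  · rw [Set.sUnion_insert, Set.sUnion_insert, hU, ← Set.union_assoc, hXY, tail_eq]
    have hn3 : n - 3 + 3 = n := by ring
    rw [hn3, Set.union_diff_self]
    rw [Set.union_eq_self_of_subset_left]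
    intro ⟨a, b⟩ h
    simp [rect] at h ⊢
    omega

lemma decomp {P : Set (Set Cell)} {n : ℤ} (hn : 3 ≤ n)
    (hP : IsTromTiling P (rect 2 n)) :
    (A1 ∈ P ∧ A2 ∈ P) ∨ (B1 ∈ P ∧ B2 ∈ P) := by
  obtain ⟨htrom, hdisj, hU⟩ := hP
  have hsub : ∀ p ∈ P, p ⊆ rect 2 n := fun p hp => hU ▸ Set.subset_sUnion_of_mem hp
  have hmem : ∀ c : Cell, c ∈ rect 2 n → ∃ p ∈ P, c ∈ p := by
    intro c hc; rw [← hU] at hc; exact hc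
  have h11 : ((1:ℤ),(1:ℤ)) ∈ rect 2 n := by simp [rect]; omega
  obtain ⟨T1, hT1P, hT1⟩ := hmem (1, 1) h11
  rcases F1 (htrom T1 hT1P) (hsub T1 hT1P) hT1 with rfl | rfl | rfl
  · -- T1 = A1
    have h22 : ((2:ℤ),(2:ℤ)) ∈ rect 2 n := by simp [rect]; omega
    obtain ⟨T2, hT2P, hT2⟩ := hmem (2, 2) h22
    have hne : A1 ≠ T2 := by
      rintro rfl; simp [A1, Prod.ext_iff] at hT2
    have hd := Set.disjoint_left.mp (hdisj hT1P hT2P hne)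
    have e2 : T2 = A2 := by
      refine F2 (htrom T2 hT2P) (hsub T2 hT2P) hT2 ?_ ?_ ?_ <;>
        intro h <;> exact absurd h (by intro h'; exact hd (by simp [A1]) h')
    exact Or.inl ⟨hT1P, e2 ▸ hT2P⟩
  · -- T1 = Tbad
    exfalso
    have h21 : ((2:ℤ),(1:ℤ)) ∈ rect 2 n := by simp [rect]; omega
    obtain ⟨T2, hT2P, hT2⟩ := hmem (2, 1) h21
    have hne : Tbad ≠ T2 := by
      rintro rfl; simp [Tbad, Prod.ext_iff] at hT2
    have hd := Set.disjoint_left.mp (hdisj hT1P hT2P hne)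
    refine F4 (htrom T2 hT2P) (hsub T2 hT2P) hT2 ?_ ?_ ?_ <;>
      intro h <;> exact absurd h (by intro h'; exact hd (by simp [Tbad]) h')
  · -- T1 = B1
    have h12 : ((1:ℤ),(2:ℤ)) ∈ rect 2 n := by simp [rect]; omega
    obtain ⟨T2, hT2P, hT2⟩ := hmem (1, 2) h12
    have hne : B1 ≠ T2 := by
      rintro rfl; simp [B1, Prod.ext_iff] at hT2
    have hd := Set.disjoint_left.mp (hdisj hT1P hT2P hne)
    have e2 : T2 = B2 := by
      refine F3 (htrom T2 hT2P) (hsub T2 hT2P) hT2 ?_ ?_ ?_ <;>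
        intro h <;> exact absurd h (by intro h'; exact hd (by simp [B1]) h')
    exact Or.inr ⟨hT1P, e2 ▸ hT2P⟩

lemma col4 {P0 : Set (Set Cell)} {n : ℤ} (h : IsTromTiling P0 (rect 2 n))
    {X : Set Cell} (hX : X ∈ Set.image (shc 3) '' P0) : ∃ c ∈ X, 4 ≤ c.2 := by
  obtain ⟨q, hq, rfl⟩ := hX
  obtain ⟨c0, hc0⟩ := tromino_nonempty (h.1 q hq)
  have hcr : c0 ∈ rect 2 n := h.2.2 ▸ ⟨q, hq, hc0⟩
  refine ⟨shc 3 c0, Set.mem_image_of_mem _ hc0, ?_⟩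
  have h1 := hcr.2.2.1
  simp only [shc]
  omega

lemma ne_of_col4 {X : Set Cell} (h : ∃ c ∈ X, 4 ≤ c.2) :
    X ≠ A1 ∧ X ≠ A2 ∧ X ≠ B1 ∧ X ≠ B2 := by
  obtain ⟨⟨a, b⟩, hc, hb⟩ := h
  refine ⟨?_, ?_, ?_, ?_⟩ <;> rintro rfl <;>
    simp [A1, A2, B1, B2, Prod.ext_iff] at hc <;> omega

lemma main (m : ℕ) : {P | IsTromTiling P (rect 2 (3 * (m : ℤ)))}.Finite ∧
    {P | IsTromTiling P (rect 2 (3 * (m : ℤ)))}.ncard = 2 ^ m := by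
  induction m with
  | zero =>
    have hre : rect 2 (3 * ((0 : ℕ) : ℤ)) = ∅ := by
      ext ⟨a, b⟩; simp [rect]; omega
    have hset : {P | IsTromTiling P (rect 2 (3 * ((0 : ℕ) : ℤ)))} = {∅} := by
      ext P
      simp only [Set.mem_setOf_eq, Set.mem_singleton_iff, hre]
      constructor
      · rintro ⟨htrom, -, hU⟩
        ext p
        simp only [Set.mem_empty_iff_false, iff_false]
        intro hp
        obtain ⟨c, hc⟩ := tromino_nonempty (htrom p hp)
        exact (hU ▸ (⟨p, hp, hc⟩ : c ∈ ⋃₀ P) : c ∈ (∅ : Set Cell))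
      · rintro rfl
        exact ⟨by simp, by simp, by simp⟩
    rw [hset]
    exact ⟨Set.finite_singleton _, by simp⟩
  | succ m ih =>
    set n : ℤ := 3 * (m : ℤ) with hn
    have hcast : 3 * ((m + 1 : ℕ) : ℤ) = n + 3 := by push_cast [hn]; ring
    rw [hcast]
    have hn0 : 0 ≤ n := by positivity
    have hsub3 : n + 3 - 3 = n := by ring
    set Tm := {P | IsTromTiling P (rect 2 n)} with hTm
    set gA : Set (Set Cell) → Set (Set Cell) :=
      fun P => insert A1 (insert A2 (Set.image (shc 3) '' P)) with hgA
    set gB : Set (Set Cell) → Set (Set Cell) :=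
      fun P => insert B1 (insert B2 (Set.image (shc 3) '' P)) with hgB
    have hback : ∀ P0 ∈ Tm, Set.image (shc 3) '' (Set.image (shc (-3)) '' (P0 : Set (Set Cell))) = P0 := by
      intro P0 _
      have h := shc_shc2 (-3) P0
      norm_num at h
      exact h
    have key : {P | IsTromTiling P (rect 2 (n + 3))} = gA '' Tm ∪ gB '' Tm := by
      ext P
      simp only [Set.mem_setOf_eq, Set.mem_union]
      constructor
      · intro hP
        rcases decomp (by omega) hP with ⟨h1, h2⟩ | ⟨h1, h2⟩
        · left
          have hQ : IsTromTiling (P \ {A1, A2}) (shc 3 '' rect 2 n) := by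
            have := remove_two hP h1 h2 unionA
            rwa [hsub3] at this
          refine ⟨Set.image (shc (-3)) '' (P \ {A1, A2}), ?_, ?_⟩
          · have := tiling_shift (-3) hQ
            rwa [shc_shc] at this
          · show insert A1 (insert A2 (Set.image (shc 3) '' (Set.image (shc (-3)) '' (P \ {A1, A2})))) = P
            have h := shc_shc2 (-3) (P \ {A1, A2})
            norm_num at h
            rw [h]
            ext x
            simp only [Set.mem_insert_iff, Set.mem_diff, Set.mem_singleton_iff]
            constructor
            · rintro (rfl | rfl | ⟨hx, -⟩)
              exacts [h1, h2, hx]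
            · intro hx
              by_cases e1 : x = A1
              · exact Or.inl e1
              by_cases e2 : x = A2
              · exact Or.inr (Or.inl e2)
              · exact Or.inr (Or.inr ⟨hx, by simp [e1, e2]⟩)
        · right
          have hQ : IsTromTiling (P \ {B1, B2}) (shc 3 '' rect 2 n) := by
            have := remove_two hP h1 h2 unionB
            rwa [hsub3] at this
          refine ⟨Set.image (shc (-3)) '' (P \ {B1, B2}), ?_, ?_⟩
          · have := tiling_shift (-3) hQ
            rwa [shc_shc] at this
          · show insert B1 (insert B2 (Set.image (shc 3) '' (Set.image (shc (-3)) '' (P \ {B1, B2})))) = P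
            have h := shc_shc2 (-3) (P \ {B1, B2})
            norm_num at h
            rw [h]
            ext x
            simp only [Set.mem_insert_iff, Set.mem_diff, Set.mem_singleton_iff]
            constructor
            · rintro (rfl | rfl | ⟨hx, -⟩)
              exacts [h1, h2, hx]
            · intro hx
              by_cases e1 : x = B1
              · exact Or.inl e1
              by_cases e2 : x = B2
              · exact Or.inr (Or.inl e2)
              · exact Or.inr (Or.inr ⟨hx, by simp [e1, e2]⟩)
      · rintro (⟨P0, hP0, rfl⟩ | ⟨P0, hP0, rfl⟩)
        · show IsTromTiling (insert A1 (insert A2 (Set.image (shc 3) '' P0))) (rect 2 (n + 3))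
          refine add_two (by omega) ?_ tromA1 tromA2 unionA disjA
          rw [hsub3]
          exact tiling_shift 3 hP0
        · show IsTromTiling (insert B1 (insert B2 (Set.image (shc 3) '' P0))) (rect 2 (n + 3))
          refine add_two (by omega) ?_ tromB1 tromB2 unionB disjB
          rw [hsub3]
          exact tiling_shift 3 hP0
    have hinj2 : Function.Injective (Set.image (Set.image (shc 3))) :=
      Set.image_injective.mpr (Set.image_injective.mpr (shc_inj 3))
    have hRA : ∀ P0 ∈ Tm, gA P0 \ {A1, A2} = Set.image (shc 3) '' P0 := by
      intro P0 hP0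
      ext x
      simp only [hgA, Set.mem_diff, Set.mem_insert_iff, Set.mem_singleton_iff]
      constructor
      · rintro ⟨(rfl | rfl | hx), hnx⟩
        · exact absurd (Or.inl rfl) hnx
        · exact absurd (Or.inr rfl) hnx
        · exact hx
      · intro hx
        have hne := ne_of_col4 (col4 hP0 hx)
        exact ⟨Or.inr (Or.inr hx), by push_neg; exact ⟨hne.1, hne.2.1⟩⟩
    have hRB : ∀ P0 ∈ Tm, gB P0 \ {B1, B2} = Set.image (shc 3) '' P0 := by
      intro P0 hP0
      ext x
      simp only [hgB, Set.mem_diff, Set.mem_insert_iff, Set.mem_singleton_iff]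
      constructor
      · rintro ⟨(rfl | rfl | hx), hnx⟩
        · exact absurd (Or.inl rfl) hnx
        · exact absurd (Or.inr rfl) hnx
        · exact hx
      · intro hx
        have hne := ne_of_col4 (col4 hP0 hx)
        exact ⟨Or.inr (Or.inr hx), by push_neg; exact ⟨hne.2.2.1, hne.2.2.2⟩⟩
    have hinjA : Set.InjOn gA Tm := by
      intro P hP P' hP' he
      exact hinj2 (by rw [← hRA P hP, ← hRA P' hP', he])
    have hinjB : Set.InjOn gB Tm := by
      intro P hP P' hP' he
      exact hinj2 (by rw [← hRB P hP, ← hRB P' hP', he])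
    have hdisjAB : Disjoint (gA '' Tm) (gB '' Tm) := by
      rw [Set.disjoint_left]
      rintro P ⟨P0, hP0, rfl⟩ ⟨P1, hP1, hPe⟩
      have hA1 : A1 ∈ gB P1 := by
        rw [hPe]; exact Set.mem_insert _ _
      simp only [hgB, Set.mem_insert_iff] at hA1
      rcases hA1 with e1 | e2 | hm
      · exact A1_ne_B1 e1
      · exact A1_ne_B2 e2
      · exact (ne_of_col4 (col4 hP1 hm)).1 rfl
    refine ⟨?_, ?_⟩
    · rw [key]
      exact (ih.1.image gA).union (ih.1.image gB)
    · rw [key, Set.ncard_union_eq hdisjAB (ih.1.image gA) (ih.1.image gB),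
        Set.ncard_image_of_injOn hinjA, Set.ncard_image_of_injOn hinjB, ih.2, pow_succ]
      ring


/-- The number of tromino tilings of R(2,3t) equals 2^t. -/
theorem count_tilings_two_rows (t : ℕ) (ht : 1 ≤ t) :
    Nat.card {P : Set (Set Cell) // IsTromTiling P (rect 2 (3 * (t : ℤ)))} = 2 ^ t := by
  have h := (main t).2
  rw [← h]
  exact Nat.card_coe_set_eq _
end

section
/- For every integer t ≥ 1, the number of partitions of the rectangle R(2,3t+1) into 2t L-trominoes and exactly one vertical domino equals (t+1)·2^t. -/
/-
In a tiling of the 2 × n strip by L-trominoes and vertical dominoes, the piece covering the top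
left cell is either a vertical domino or an L-tromino, and in the second case the neighbouring
piece is forced: together they form one of the two tromino tilings of the leading 2 × 3 block.
Removing that domino or block leaves a tiling of a shorter strip. Hence the 2 × 3k strip has
2^k tromino tilings, each with 2k pieces, and the number M(t) of partitions of the 2 × (3t + 1)
strip into L-trominoes and one vertical domino satisfies M(0) = 1 and
M(t + 1) = 2^(t + 1) + 2 M(t), so M(t) = (t + 1) 2^t.
-/

section Partition

variable {α : Type*} {B Q : Set (Set α)} {A S : Set α}

lemma disjoint_of_disjoint_sUnion (hB : ∀ p ∈ B, p.Nonempty)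
    (h : Disjoint (⋃₀ B) (⋃₀ Q)) :
    Disjoint B Q :=
  Set.disjoint_left.2 fun p hpB hpQ => (hB p hpB).ne_empty <| disjoint_self.1 <|
    h.mono (Set.subset_sUnion_of_mem hpB) (Set.subset_sUnion_of_mem hpQ)

lemma pairwiseDisjoint_union_and_sUnion_iff (hB : B.PairwiseDisjoint id) (hBA : ⋃₀ B = A)
    (hBQ : Disjoint B Q) (hAS : Disjoint A S) :
    ((B ∪ Q).PairwiseDisjoint id ∧ ⋃₀ (B ∪ Q) = A ∪ S) ↔
      (Q.PairwiseDisjoint id ∧ ⋃₀ Q = S) := by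
  rw [Set.pairwiseDisjoint_union, Set.sUnion_union, hBA]
  constructor
  · rintro ⟨⟨-, hQ, hcross⟩, hU⟩
    have hQA : Disjoint (⋃₀ Q) A := hBA ▸ Set.disjoint_sUnion_left.2 fun q hq =>
      Set.disjoint_sUnion_right.2 fun p hp =>
        (hcross hp hq (fun h => Set.disjoint_left.1 hBQ hp (h ▸ hq))).symm
    refine ⟨hQ, ?_⟩
    rw [← hQA.sdiff_eq_left, ← hAS.symm.sdiff_eq_left, ← Set.union_sdiff_left, hU,
      Set.union_sdiff_left]
  · rintro ⟨hQ, rfl⟩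
    refine ⟨⟨hB, hQ, fun p hp q hq _ => ?_⟩, rfl⟩
    exact hAS.mono (hBA ▸ Set.subset_sUnion_of_mem hp) (Set.subset_sUnion_of_mem hq)

lemma ncard_sep_union (hBQ : Disjoint B Q) (hB : B.Finite) (hQ : Q.Finite)
    (f : Set α → Prop) :
    {p ∈ B ∪ Q | f p}.ncard = {p ∈ B | f p}.ncard + {p ∈ Q | f p}.ncard := by
  rw [show {p ∈ B ∪ Q | f p} = {p ∈ B | f p} ∪ {p ∈ Q | f p} from Set.sep_union]
  exact Set.ncard_union_eq (hBQ.mono (Set.sep_subset _ _) (Set.sep_subset _ _)) (hB.sep _)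
    (hQ.sep _)

lemma ncard_image_union {X : Set (Set (Set α))} (hX : ∀ Q ∈ X, Disjoint B Q) :
    ((B ∪ ·) '' X).ncard = X.ncard := by
  refine Set.InjOn.ncard_image fun Q hQ Q' hQ' h => ?_
  rw [← Set.union_sdiff_cancel_left (Set.disjoint_iff.1 (hX Q hQ)),
    ← Set.union_sdiff_cancel_left (Set.disjoint_iff.1 (hX Q' hQ')), h]

lemma disjoint_image_union {B' : Set (Set α)} {X Y : Set (Set (Set α))} {p : Set α}
    (hpB : p ∈ B) (hpB' : p ∉ B') (hY : ∀ Q ∈ Y, p ∉ Q) :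
    Disjoint ((B ∪ ·) '' X) ((B' ∪ ·) '' Y) := by
  rw [Set.disjoint_left]
  rintro _ ⟨Q, -, rfl⟩ ⟨Q', hQ', h⟩
  have hp : p ∈ B' ∪ Q' := by simp only at h; exact h ▸ Or.inl hpB
  exact hp.elim hpB' (hY Q' hQ')

lemma iUnion_bool_eq_union (s : Bool → Set α) : ⋃ b, s b = s true ∪ s false := by
  rw [← Set.iSup_eq_iUnion, iSup_bool_eq]
  rfl

lemma finite_setOf_sUnion_eq (hS : S.Finite) : {P : Set (Set α) | ⋃₀ P = S}.Finite :=
  hS.finite_subsets.finite_subsets.subset fun _ hP _ hp => hP ▸ Set.subset_sUnion_of_mem hp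

end Partition

lemma IsTromino.nonempty {T : Set Cell} (hT : IsTromino T) : T.Nonempty := by
  obtain ⟨i, j, c, hc, rfl⟩ := hT
  simp only [Set.mem_insert_iff, Set.mem_singleton_iff] at hc
  rcases hc with rfl | rfl | rfl | rfl
  exacts [⟨(i + 1, j), by simp⟩, ⟨(i, j), by simp⟩, ⟨(i, j), by simp⟩,
    ⟨(i, j), by simp⟩]

lemma not_isVDomino_of_isTromino {T : Set Cell} (hT : IsTromino T) : ¬ IsVDomino T := by
  rintro ⟨i, j, rfl⟩
  obtain ⟨i', j', c, hc, h⟩ := hT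
  have h1 := Set.ext_iff.1 h (i', j')
  have h2 := Set.ext_iff.1 h (i' + 1, j')
  have h3 := Set.ext_iff.1 h (i', j' + 1)
  have h4 := Set.ext_iff.1 h (i' + 1, j' + 1)
  simp only [Set.mem_insert_iff, Set.mem_singleton_iff] at hc
  rcases hc with rfl | rfl | rfl | rfl <;> simp [Prod.ext_iff] at h1 h2 h3 h4 <;> omega

section MixedTiling

variable {B Q : Set (Set Cell)} {A S : Set Cell}

lemma isTromTiling_union_iff (hB : IsTromTiling B A) (hBQ : Disjoint B Q) (hAS : Disjoint A S) :
    IsTromTiling (B ∪ Q) (A ∪ S) ↔ IsTromTiling Q S := by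
  unfold IsTromTiling
  rw [pairwiseDisjoint_union_and_sUnion_iff hB.2.1 hB.2.2 hBQ hAS]
  simp only [Set.mem_union, or_imp, forall_and]
  exact and_congr_left' (and_iff_right hB.1)

variable {dom : Set Cell → Prop} {c : ℕ}

lemma isMixedTiling_union_iff (hdom : ∀ p, IsTromino p → ¬ dom p) (hB : IsTromTiling B A)
    (hBf : B.Finite) (hBQ : Disjoint B Q) (hQ : Q.Finite) (hAS : Disjoint A S) :
    IsMixedTiling (B ∪ Q) (A ∪ S) dom (B.ncard + c) ↔ IsMixedTiling Q S dom c := by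
  unfold IsMixedTiling
  have hBdom : {p ∈ B | dom p} = ∅ :=
    Set.sep_eq_empty_iff_mem_false.2 fun p hp => hdom p (hB.1 p hp)
  rw [← and_assoc, pairwiseDisjoint_union_and_sUnion_iff hB.2.1 hB.2.2 hBQ hAS, and_assoc,
    ncard_sep_union hBQ hBf hQ, ncard_sep_union hBQ hBf hQ, hBdom,
    Set.sep_eq_self_iff_mem_true.2 hB.1, Set.ncard_empty, zero_add, Nat.add_left_cancel_iff]
  have hBpieces : ∀ p ∈ B, IsTromino p ∨ dom p := fun p hp => Or.inl (hB.1 p hp)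
  simp only [Set.mem_union, or_imp, forall_and]
  rw [and_iff_right hBpieces]

lemma isMixedTiling_singleton_union_iff {D : Set Cell} (hdom : ∀ p, IsTromino p → ¬ dom p)
    (hD : dom D) (hDQ : D ∉ Q) (hQ : Q.Finite) (hDS : Disjoint D S) :
    IsMixedTiling ({D} ∪ Q) (D ∪ S) dom c ↔ IsTromTiling Q S ∧ Q.ncard = c := by
  unfold IsMixedTiling IsTromTiling
  have hDQ' : Disjoint {D} Q := Set.disjoint_singleton_left.2 hDQ
  rw [← and_assoc, pairwiseDisjoint_union_and_sUnion_iff (Set.pairwiseDisjoint_singleton _ _)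
    (Set.sUnion_singleton D) hDQ' hDS, ncard_sep_union hDQ' (Set.finite_singleton D) hQ,
    ncard_sep_union hDQ' (Set.finite_singleton D) hQ]
  have hDdom : {p ∈ ({D} : Set (Set Cell)) | dom p} = {D} :=
    Set.sep_eq_self_iff_mem_true.2 (by simpa)
  have hDtrom : {p ∈ ({D} : Set (Set Cell)) | IsTromino p} = ∅ :=
    Set.sep_eq_empty_iff_mem_false.2 (by simpa using fun h => hdom D h hD)
  rw [hDdom, hDtrom, Set.ncard_singleton, Set.ncard_empty, zero_add, add_eq_left,
    Set.ncard_eq_zero (hQ.sep _), Set.sep_eq_empty_iff_mem_false]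
  simp only [Set.mem_union, Set.mem_singleton_iff, or_imp, forall_and, forall_eq, hD, or_true,
    true_and]
  constructor
  · rintro ⟨hPU, hpieces, hnd, rfl⟩
    have htrom : ∀ p ∈ Q, IsTromino p := fun p hp => (hpieces p hp).resolve_right (hnd p hp)
    exact ⟨⟨htrom, hPU⟩, by rw [Set.sep_eq_self_iff_mem_true.2 htrom]⟩
  · rintro ⟨⟨htrom, hPU⟩, rfl⟩
    exact ⟨hPU, fun p hp => Or.inl (htrom p hp), fun p hp => hdom p (htrom p hp),
      by rw [Set.sep_eq_self_iff_mem_true.2 htrom]⟩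

end MixedTiling

namespace TwoRowTiling

def strip (a n : ℤ) : Set Cell := Set.Icc 1 2 ×ˢ Set.Icc (a + 1) (a + n)

def vdom (j : ℤ) : Set Cell := {(1, j), (2, j)}

/- Row 1 is drawn on top, so `tromNoSE j` is the 2×2 block in columns `j, j + 1` without its
lower right cell. -/
def tromNoSE (j : ℤ) : Set Cell := {(1, j), (2, j), (1, j + 1)}
def tromNoNE (j : ℤ) : Set Cell := {(1, j), (2, j), (2, j + 1)}
def tromNoSW (j : ℤ) : Set Cell := {(1, j), (1, j + 1), (2, j + 1)}
def tromNoNW (j : ℤ) : Set Cell := {(2, j), (1, j + 1), (2, j + 1)}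

def blockTiling (a : ℤ) : Bool → Set (Set Cell)
  | true => {tromNoSE (a + 1), tromNoNW (a + 2)}
  | false => {tromNoNE (a + 1), tromNoSW (a + 2)}

def IsStripPiece (a n : ℤ) (p : Set Cell) : Prop :=
  ∃ j, a + 1 ≤ j ∧ (j ≤ a + n ∧ p = vdom j ∨
    j + 1 ≤ a + n ∧ (p = tromNoSE j ∨ p = tromNoNE j ∨ p = tromNoSW j ∨ p = tromNoNW j))

section Geometry

variable {a m k n : ℤ}

@[simp] lemma mem_strip {c : Cell} :
    c ∈ strip a n ↔ (1 ≤ c.1 ∧ c.1 ≤ 2) ∧ a + 1 ≤ c.2 ∧ c.2 ≤ a + n := Iff.rfl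

lemma strip_add (hm : 0 ≤ m) (hk : 0 ≤ k) :
    strip a (m + k) = strip a m ∪ strip (a + m) k := by
  ext; simp; omega

lemma disjoint_strip : Disjoint (strip a m) (strip (a + m) k) :=
  Set.disjoint_left.2 fun _ h h' => by simp at h h'; omega

lemma finite_strip : (strip a n).Finite := (Set.finite_Icc _ _).prod (Set.finite_Icc _ _)

lemma finite_of_sUnion_eq_strip {P : Set (Set Cell)} (h : ⋃₀ P = strip a n) : P.Finite :=
  finite_strip.finite_subsets.subset fun _ hp => h ▸ Set.subset_sUnion_of_mem hp

lemma notMem_of_sUnion_eq_strip {Q : Set (Set Cell)} (hQ : ⋃₀ Q = strip a n) {p : Set Cell}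
    {x : Cell} (hxp : x ∈ p) (hx : x ∉ strip a n) : p ∉ Q :=
  fun h => hx (hQ ▸ Set.mem_sUnion_of_mem hxp h)

lemma vdom_notMem_of_sUnion_eq_strip {Q : Set (Set Cell)} (hQ : ⋃₀ Q = strip (a + 1) n) :
    vdom (a + 1) ∉ Q :=
  notMem_of_sUnion_eq_strip hQ (x := (1, a + 1)) (by simp [vdom]) (by simp)

lemma strip_one : strip a 1 = vdom (a + 1) := by
  ext ⟨x, y⟩; simp [vdom, Prod.ext_iff]; omega

lemma isVDomino_vdom (j : ℤ) : IsVDomino (vdom j) := ⟨1, j, rfl⟩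

lemma isTromino_tromNoSE (j : ℤ) : IsTromino (tromNoSE j) :=
  ⟨1, j, (2, j + 1), by simp, by ext ⟨x, y⟩; simp [tromNoSE, Prod.ext_iff]; omega⟩

lemma isTromino_tromNoNE (j : ℤ) : IsTromino (tromNoNE j) :=
  ⟨1, j, (1, j + 1), by simp, by ext ⟨x, y⟩; simp [tromNoNE, Prod.ext_iff]; omega⟩

lemma isTromino_tromNoSW (j : ℤ) : IsTromino (tromNoSW j) :=
  ⟨1, j, (2, j), by simp, by ext ⟨x, y⟩; simp [tromNoSW, Prod.ext_iff]; omega⟩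

lemma isTromino_tromNoNW (j : ℤ) : IsTromino (tromNoNW j) :=
  ⟨1, j, (1, j), by simp, by ext ⟨x, y⟩; simp [tromNoNW, Prod.ext_iff]⟩

lemma isTromTiling_blockTiling (b : Bool) : IsTromTiling (blockTiling a b) (strip a 3) := by
  refine ⟨?_, ?_, ?_⟩
  · cases b <;> simp [blockTiling, isTromino_tromNoSE, isTromino_tromNoNE, isTromino_tromNoSW,
      isTromino_tromNoNW]
  · have h : Disjoint (tromNoSE (a + 1)) (tromNoNW (a + 2)) ∧
        Disjoint (tromNoNE (a + 1)) (tromNoSW (a + 2)) := by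
      simp [tromNoSE, tromNoNE, tromNoSW, tromNoNW, Prod.ext_iff]
    cases b
    exacts [Set.pairwise_pair.2 fun _ => ⟨h.2, h.2.symm⟩,
      Set.pairwise_pair.2 fun _ => ⟨h.1, h.1.symm⟩]
  · cases b <;> ext ⟨x, y⟩ <;> simp [blockTiling, tromNoSE, tromNoNE, tromNoSW, tromNoNW,
      Prod.ext_iff] <;> omega

lemma ncard_blockTiling (b : Bool) : (blockTiling a b).ncard = 2 := by
  cases b <;> refine Set.ncard_pair fun h => ?_ <;>
    simpa [tromNoSE, tromNoNE, tromNoSW, tromNoNW, Prod.ext_iff] using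
      congrArg ((1, a + 1) ∈ ·) h

lemma disjoint_blockTiling {Q : Set (Set Cell)} (hQ : ⋃₀ Q = strip (a + 3) n) (b : Bool) :
    Disjoint (blockTiling a b) Q :=
  disjoint_of_disjoint_sUnion (fun p hp => ((isTromTiling_blockTiling b).1 p hp).nonempty)
    (by rw [(isTromTiling_blockTiling b).2.2, hQ]; exact disjoint_strip)

lemma tromNoSE_notMem_blockTiling_false : tromNoSE (a + 1) ∉ blockTiling a false := by
  rintro (h | h) <;>
  · have h1 := Set.ext_iff.1 h (1, a + 1)
    have h2 := Set.ext_iff.1 h (1, a + 2)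
    simp [tromNoSE, tromNoNE, tromNoSW, Prod.ext_iff] at h1 h2 <;> omega

lemma isStripPiece_of_subset {p : Set Cell} (hp : IsTromino p ∨ IsVDomino p)
    (hsub : p ⊆ strip a n) : IsStripPiece a n p := by
  rcases hp with ⟨i, j, c, hc, rfl⟩ | ⟨i, j, rfl⟩
  · have hcell : ∀ x ∈ ({(i, j), (i + 1, j), (i, j + 1), (i + 1, j + 1)} : Set Cell),
        x = c ∨ x ∈ strip a n := fun x hx => or_iff_not_imp_left.2 fun hxc => hsub ⟨hx, hxc⟩
    have h1 := hcell (i, j) (by simp)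
    have h2 := hcell (i + 1, j) (by simp)
    have h3 := hcell (i, j + 1) (by simp)
    have h4 := hcell (i + 1, j + 1) (by simp)
    simp only [Set.mem_insert_iff, Set.mem_singleton_iff] at hc
    rcases hc with rfl | rfl | rfl | rfl <;> simp [Prod.ext_iff] at h1 h2 h3 h4 <;>
      (obtain rfl : i = 1 := by omega) <;>
      refine ⟨j, by omega, Or.inr ⟨by omega, ?_⟩⟩
    · refine Or.inr (Or.inr (Or.inr ?_)); ext ⟨x, y⟩; simp [tromNoNW, Prod.ext_iff]
    · refine Or.inr (Or.inr (Or.inl ?_)); ext ⟨x, y⟩; simp [tromNoSW, Prod.ext_iff]; omega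
    · refine Or.inr (Or.inl ?_); ext ⟨x, y⟩; simp [tromNoNE, Prod.ext_iff]; omega
    · refine Or.inl ?_; ext ⟨x, y⟩; simp [tromNoSE, Prod.ext_iff]; omega
  · have h1 := hsub (show (i, j) ∈ ({(i, j), (i + 1, j)} : Set Cell) by simp)
    have h2 := hsub (show (i + 1, j) ∈ ({(i, j), (i + 1, j)} : Set Cell) by simp)
    simp only [mem_strip] at h1 h2
    obtain rfl : i = 1 := by omega
    exact ⟨j, by omega, Or.inl ⟨by omega, rfl⟩⟩

lemma vdom_mem_or_blockTiling_subset {P : Set (Set Cell)} (hn : 0 < n)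
    (hdisj : P.PairwiseDisjoint id) (hU : ⋃₀ P = strip a n)
    (hpieces : ∀ p ∈ P, IsTromino p ∨ IsVDomino p) :
    vdom (a + 1) ∈ P ∨ ∃ b, blockTiling a b ⊆ P := by
  have cover : ∀ x ∈ strip a n, ∃ p ∈ P, x ∈ p ∧ IsStripPiece a n p := fun x hx => by
    rw [← hU] at hx
    obtain ⟨p, hp, hxp⟩ := hx
    exact ⟨p, hp, hxp,
      isStripPiece_of_subset (hpieces p hp) (hU ▸ Set.subset_sUnion_of_mem hp)⟩
  have apart : ∀ x ∈ strip a n, ∀ T ∈ P, x ∉ T →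
      ∃ p ∈ P, x ∈ p ∧ Disjoint p T ∧ IsStripPiece a n p := fun x hx T hT hxT => by
    obtain ⟨p, hp, hxp, hpiece⟩ := cover x hx
    exact ⟨p, hp, hxp, hdisj hp hT (by rintro rfl; exact hxT hxp), hpiece⟩
  obtain ⟨T, hT, hxT, j, hj, hTj⟩ := cover (1, a + 1) (by simp; omega)
  rcases hTj with ⟨-, rfl⟩ | ⟨hjn, rfl | rfl | rfl | rfl⟩ <;>
    simp only [vdom, tromNoSE, tromNoNE, tromNoSW, tromNoNW, Set.mem_insert_iff,
      Set.mem_singleton_iff, Prod.ext_iff] at hxT <;>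
    (obtain rfl : j = a + 1 := by omega)
  · exact Or.inl hT
  · obtain ⟨p, hp, hxp, hpT, j', hj', hpj'⟩ :=
      apart (2, a + 2) (by simp; omega) _ hT (by simp [tromNoSE])
    obtain rfl : p = tromNoNW (a + 2) := by
      rcases hpj' with ⟨-, rfl⟩ | ⟨-, rfl | rfl | rfl | rfl⟩ <;>
        simp [vdom, tromNoSE, tromNoNE, tromNoSW, tromNoNW, Prod.ext_iff] at hxp hpT <;>
        first | omega | (obtain rfl : j' = a + 2 := by omega); rfl
    exact Or.inr ⟨true, by simp [blockTiling, Set.insert_subset_iff, hT, hp]⟩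
  · obtain ⟨p, hp, hxp, hpT, j', hj', hpj'⟩ :=
      apart (1, a + 2) (by simp; omega) _ hT (by simp [tromNoNE])
    obtain rfl : p = tromNoSW (a + 2) := by
      rcases hpj' with ⟨-, rfl⟩ | ⟨-, rfl | rfl | rfl | rfl⟩ <;>
        simp [vdom, tromNoSE, tromNoNE, tromNoSW, tromNoNW, Prod.ext_iff] at hxp hpT <;>
        first | omega | (obtain rfl : j' = a + 2 := by omega); rfl
    exact Or.inr ⟨false, by simp [blockTiling, Set.insert_subset_iff, hT, hp]⟩
  · -- every piece that could cover `(2, a + 1)` meets `tromNoSW (a + 1)`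
    obtain ⟨p, hp, hxp, hpT, j', hj', hpj'⟩ :=
      apart (2, a + 1) (by simp; omega) _ hT (by simp [tromNoSW])
    rcases hpj' with ⟨-, rfl⟩ | ⟨-, rfl | rfl | rfl | rfl⟩ <;>
      simp [vdom, tromNoSE, tromNoNE, tromNoSW, tromNoNW, Prod.ext_iff] at hxp hpT <;>
      omega
  · omega

lemma disjoint_image_blockTiling_union {X : Set (Set (Set Cell))}
    (hX : ∀ Q ∈ X, ∃ n, ⋃₀ Q = strip (a + 3) n) :
    Disjoint ((blockTiling a true ∪ ·) '' X) ((blockTiling a false ∪ ·) '' X) :=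
  disjoint_image_union (by simp [blockTiling]) tromNoSE_notMem_blockTiling_false fun Q hQ =>
    have ⟨_, hQ⟩ := hX Q hQ
    notMem_of_sUnion_eq_strip hQ (x := (1, a + 1)) (by simp [tromNoSE]) (by simp)

lemma ncard_iUnion_image_blockTiling_union {X : Set (Set (Set Cell))} (hXf : X.Finite)
    (hX : ∀ Q ∈ X, ∃ n, ⋃₀ Q = strip (a + 3) n) :
    (⋃ b, (blockTiling a b ∪ ·) '' X).ncard = 2 * X.ncard := by
  have hdisj : ∀ b, ∀ Q ∈ X, Disjoint (blockTiling a b) Q := fun b Q hQ =>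
    have ⟨_, hQ⟩ := hX Q hQ
    disjoint_blockTiling hQ b
  rw [iUnion_bool_eq_union, Set.ncard_union_eq (disjoint_image_blockTiling_union hX)
    (hXf.image _) (hXf.image _), ncard_image_union (hdisj true), ncard_image_union (hdisj false),
    two_mul]

end Geometry

def tromTilings (a : ℤ) (k : ℕ) : Set (Set (Set Cell)) :=
  {P | IsTromTiling P (strip a (3 * k))}

def mixedTilings (a : ℤ) (t : ℕ) : Set (Set (Set Cell)) :=
  {P | IsMixedTiling P (strip a (3 * t + 1)) IsVDomino (2 * t)}

variable {a : ℤ} {k t : ℕ} {P Q : Set (Set Cell)}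

lemma finite_tromTilings : (tromTilings a k).Finite :=
  (finite_setOf_sUnion_eq finite_strip).subset fun _ hP => hP.2.2

lemma finite_mixedTilings : (mixedTilings a t).Finite :=
  (finite_setOf_sUnion_eq finite_strip).subset fun _ hP => hP.2.1

lemma blockTiling_union_mem_tromTilings_iff {b : Bool} (hQ : Disjoint (blockTiling a b) Q) :
    blockTiling a b ∪ Q ∈ tromTilings a (k + 1) ↔ Q ∈ tromTilings (a + 3) k := by
  rw [tromTilings, Set.mem_ofPred_eq,
    show (3 * ((k + 1 : ℕ) : ℤ)) = 3 + 3 * k by push_cast; ring,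
    strip_add (by norm_num) (by positivity),
    isTromTiling_union_iff (isTromTiling_blockTiling b) hQ disjoint_strip]
  rfl

lemma tromTilings_zero : tromTilings a 0 = {∅} := by
  ext P
  simp only [tromTilings, Set.mem_ofPred_eq, Set.mem_singleton_iff, CharP.cast_eq_zero, mul_zero]
  refine ⟨fun hP => Set.eq_empty_of_forall_notMem fun p hp => ?_, ?_⟩
  · obtain ⟨x, hx⟩ := (hP.1 p hp).nonempty
    have := hP.2.2 ▸ Set.mem_sUnion_of_mem hx hp
    simp at this
    omega
  · rintro rfl
    exact ⟨by simp, Set.pairwiseDisjoint_empty, by ext; simp⟩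

lemma tromTilings_succ :
    tromTilings a (k + 1) = ⋃ b, (blockTiling a b ∪ ·) '' tromTilings (a + 3) k := by
  ext P
  simp only [Set.mem_iUnion, Set.mem_image]
  constructor
  · intro hP
    obtain ⟨b, hb⟩ := (vdom_mem_or_blockTiling_subset (by positivity) hP.2.1 hP.2.2
      fun p hp => Or.inl (hP.1 p hp)).resolve_left
      fun h => not_isVDomino_of_isTromino (hP.1 _ h) (isVDomino_vdom _)
    rw [← Set.union_sdiff_cancel hb] at hP ⊢
    exact ⟨b, _, (blockTiling_union_mem_tromTilings_iff Set.disjoint_sdiff_right).1 hP, rfl⟩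
  · rintro ⟨b, Q, hQ, rfl⟩
    exact (blockTiling_union_mem_tromTilings_iff (disjoint_blockTiling hQ.2.2 b)).2 hQ

lemma ncard_of_mem_tromTilings (hP : P ∈ tromTilings a k) : P.ncard = 2 * k := by
  induction k generalizing a P with
  | zero => rw [tromTilings_zero, Set.mem_singleton_iff] at hP; simp [hP]
  | succ k ih =>
    rw [tromTilings_succ] at hP
    obtain ⟨b, Q, hQ, rfl⟩ := Set.mem_iUnion.1 hP
    rw [Set.ncard_union_eq (disjoint_blockTiling hQ.2.2 b)
      (finite_of_sUnion_eq_strip (isTromTiling_blockTiling b).2.2)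
      (finite_of_sUnion_eq_strip hQ.2.2), ncard_blockTiling, ih hQ]
    ring

lemma ncard_tromTilings : (tromTilings a k).ncard = 2 ^ k := by
  induction k generalizing a with
  | zero => simp [tromTilings_zero]
  | succ k ih =>
    rw [tromTilings_succ, ncard_iUnion_image_blockTiling_union finite_tromTilings
      (fun Q hQ => ⟨_, hQ.2.2⟩), ih, pow_succ, mul_comm]

lemma singleton_vdom_union_mem_mixedTilings_iff (hQ : vdom (a + 1) ∉ Q) (hQf : Q.Finite) :
    {vdom (a + 1)} ∪ Q ∈ mixedTilings a t ↔ Q ∈ tromTilings (a + 1) t := by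
  rw [mixedTilings, Set.mem_ofPred_eq, show 3 * (t : ℤ) + 1 = 1 + 3 * t by ring,
    strip_add (by norm_num) (by positivity),
    strip_one, isMixedTiling_singleton_union_iff (fun p => not_isVDomino_of_isTromino)
      (isVDomino_vdom _) hQ hQf (strip_one ▸ disjoint_strip)]
  exact and_iff_left_of_imp ncard_of_mem_tromTilings

lemma blockTiling_union_mem_mixedTilings_iff {b : Bool} (hQ : Disjoint (blockTiling a b) Q)
    (hQf : Q.Finite) :
    blockTiling a b ∪ Q ∈ mixedTilings a (t + 1) ↔ Q ∈ mixedTilings (a + 3) t := by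
  rw [mixedTilings, Set.mem_ofPred_eq,
    show (3 * ((t + 1 : ℕ) : ℤ) + 1) = 3 + (3 * t + 1) by push_cast; ring,
    strip_add (by norm_num) (by positivity), show 2 * (t + 1) = (blockTiling a b).ncard + 2 * t by
      rw [ncard_blockTiling]; ring,
    isMixedTiling_union_iff (fun p => not_isVDomino_of_isTromino) (isTromTiling_blockTiling b)
      (finite_of_sUnion_eq_strip (isTromTiling_blockTiling b).2.2) hQ hQf disjoint_strip]
  rfl

lemma mem_image_singleton_vdom_union_of_vdom_mem (hP : P ∈ mixedTilings a t)
    (hv : vdom (a + 1) ∈ P) :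
    P ∈ ({vdom (a + 1)} ∪ ·) '' tromTilings (a + 1) t := by
  rw [← Set.union_sdiff_cancel (Set.singleton_subset_iff.2 hv)] at hP ⊢
  refine ⟨_, (singleton_vdom_union_mem_mixedTilings_iff (fun h => h.2 rfl)
    ((finite_of_sUnion_eq_strip hP.2.1).subset Set.subset_union_right)).1 hP, rfl⟩

lemma image_singleton_vdom_union_subset :
    ({vdom (a + 1)} ∪ ·) '' tromTilings (a + 1) t ⊆ mixedTilings a t := by
  rintro _ ⟨Q, hQ, rfl⟩
  exact (singleton_vdom_union_mem_mixedTilings_iff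
    (vdom_notMem_of_sUnion_eq_strip hQ.2.2) (finite_of_sUnion_eq_strip hQ.2.2)).2 hQ

lemma mixedTilings_zero : mixedTilings a 0 = ({vdom (a + 1)} ∪ ·) '' tromTilings (a + 1) 0 := by
  refine subset_antisymm (fun P hP => ?_) image_singleton_vdom_union_subset
  refine mem_image_singleton_vdom_union_of_vdom_mem hP
    ((vdom_mem_or_blockTiling_subset (by norm_num) hP.1 hP.2.1 hP.2.2.1).resolve_right ?_)
  rintro ⟨b, hb⟩
  have h := Set.sUnion_mono hb
  rw [(isTromTiling_blockTiling b).2.2, hP.2.1] at h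
  simpa using h (show ((1 : ℤ), a + 3) ∈ strip a 3 by simp)

lemma mixedTilings_succ :
    mixedTilings a (t + 1) = ({vdom (a + 1)} ∪ ·) '' tromTilings (a + 1) (t + 1) ∪
      ⋃ b, (blockTiling a b ∪ ·) '' mixedTilings (a + 3) t := by
  refine subset_antisymm (fun P hP => ?_) (Set.union_subset image_singleton_vdom_union_subset ?_)
  · rcases vdom_mem_or_blockTiling_subset (by positivity) hP.1 hP.2.1 hP.2.2.1 with
      hv | ⟨b, hb⟩
    · exact Or.inl (mem_image_singleton_vdom_union_of_vdom_mem hP hv)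
    · refine Or.inr (Set.mem_iUnion.2 ⟨b, ?_⟩)
      rw [← Set.union_sdiff_cancel hb] at hP ⊢
      exact ⟨_, (blockTiling_union_mem_mixedTilings_iff Set.disjoint_sdiff_right
        ((finite_of_sUnion_eq_strip hP.2.1).subset Set.subset_union_right)).1 hP, rfl⟩
  · rintro _ ⟨_, ⟨b, rfl⟩, Q, hQ, rfl⟩
    exact (blockTiling_union_mem_mixedTilings_iff (disjoint_blockTiling hQ.2.1 b)
      (finite_of_sUnion_eq_strip hQ.2.1)).2 hQ

lemma ncard_image_singleton_vdom_union :
    (({vdom (a + 1)} ∪ ·) '' tromTilings (a + 1) k).ncard = 2 ^ k := by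
  rw [ncard_image_union fun Q hQ => Set.disjoint_singleton_left.2
    (vdom_notMem_of_sUnion_eq_strip hQ.2.2), ncard_tromTilings]

lemma ncard_mixedTilings : (mixedTilings a t).ncard = (t + 1) * 2 ^ t := by
  induction t generalizing a with
  | zero => rw [mixedTilings_zero, ncard_image_singleton_vdom_union]; rfl
  | succ t ih =>
    have hdisj : Disjoint (({vdom (a + 1)} ∪ ·) '' tromTilings (a + 1) (t + 1))
        (⋃ b, (blockTiling a b ∪ ·) '' mixedTilings (a + 3) t) :=
      Set.disjoint_iUnion_right.2 fun b => disjoint_image_union (Set.mem_singleton _)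
        (fun h => not_isVDomino_of_isTromino ((isTromTiling_blockTiling b).1 _ h)
          (isVDomino_vdom _))
        fun Q hQ => notMem_of_sUnion_eq_strip hQ.2.1 (x := (1, a + 1)) (by simp [vdom]) (by simp)
    rw [mixedTilings_succ, Set.ncard_union_eq hdisj (finite_tromTilings.image _)
      (Set.finite_iUnion fun _ => finite_mixedTilings.image _), ncard_image_singleton_vdom_union,
      ncard_iUnion_image_blockTiling_union finite_mixedTilings (fun Q hQ => ⟨_, hQ.2.1⟩), ih]
    ring

end TwoRowTiling

theorem count_vertical_domino_deficient_general (t : ℕ) :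
    Nat.card {P : Set (Set Cell) //
      IsMixedTiling P (rect 2 (3 * (t : ℤ) + 1)) IsVDomino (2 * t)} = (t + 1) * 2 ^ t := by
  have hrect : rect 2 (3 * (t : ℤ) + 1) = TwoRowTiling.strip 0 (3 * (t : ℤ) + 1) := by
    ext; simp [rect]; omega
  rw [hrect, ← TwoRowTiling.ncard_mixedTilings (a := 0), ← Nat.card_coe_set_eq]
  rfl

/-- The number of partitions of R(2,3t+1) into 2t L-trominoes and one vertical domino. -/
theorem count_vertical_domino_deficient (t : ℕ) (ht : 1 ≤ t) :
    Nat.card {P : Set (Set Cell) //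
      IsMixedTiling P (rect 2 (3 * (t : ℤ) + 1)) IsVDomino (2 * t)} = (t + 1) * 2 ^ t :=
  count_vertical_domino_deficient_general t
end

section
/- (Deficient 5×7 Lemma) Let D ⊆ R(5,7) be a domino. If D is a horizontal domino lying in a row i with i even, or D is a vertical domino lying in a column j with j even, then R(5,7) \ D is not tileable by L-trominoes. -/
/-- Sum formula for ncard of a pairwise-disjoint finite union, intersected with a set. -/
lemma ncard_sUnion_inter (F : Finset (Set Cell))
    (hd : (F : Set (Set Cell)).PairwiseDisjoint id)
    (hfin : ∀ p ∈ F, p.Finite) (X : Set Cell) :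
    ((⋃₀ (F : Set (Set Cell))) ∩ X).ncard = ∑ p ∈ F, (p ∩ X).ncard := by
  classical
  induction F using Finset.induction_on with
  | empty => simp
  | @insert a F ha ih =>
    have hd' : (F : Set (Set Cell)).PairwiseDisjoint id :=
      hd.subset (by simp [Set.subset_def]; tauto)
    have hfin' : ∀ p ∈ F, p.Finite := fun p hp => hfin p (Finset.mem_insert_of_mem hp)
    have hdisj : Disjoint a (⋃₀ (F : Set (Set Cell))) := by
      rw [Set.disjoint_sUnion_right]
      intro b hb
      exact hd (by simp) (by simp [hb]) (fun hab => ha (hab ▸ hb))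
    have hfa : a.Finite := hfin a (Finset.mem_insert_self a F)
    have hfU : (⋃₀ (F : Set (Set Cell))).Finite :=
      Set.Finite.sUnion F.finite_toSet hfin'
    rw [Finset.coe_insert, Set.sUnion_insert, Set.union_inter_distrib_right,
      Set.ncard_union_eq (hdisj.mono Set.inter_subset_left Set.inter_subset_left)
        (hfa.inter_of_left X) (hfU.inter_of_left X),
      Finset.sum_insert ha, ih hd' hfin']

lemma tromino_ncard {T : Set Cell} (hT : IsTromino T) : T.ncard = 3 := by
  obtain ⟨i, j, c, hc, rfl⟩ := hT
  have h4 : ({(i, j), (i + 1, j), (i, j + 1), (i + 1, j + 1)} : Set Cell).ncard = 4 := by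
    rw [Set.ncard_insert_of_notMem (by simp [Prod.ext_iff]),
      Set.ncard_insert_of_notMem (by simp [Prod.ext_iff]),
      Set.ncard_insert_of_notMem (by simp [Prod.ext_iff]),
      Set.ncard_singleton]
  rw [Set.ncard_diff_singleton_of_mem hc, h4]

lemma tromino_black_unique {T : Set Cell} (hT : IsTromino T) {a b : Cell}
    (haT : a ∈ T) (hbT : b ∈ T)
    (hao : a.1 % 2 = 1 ∧ a.2 % 2 = 1) (hbo : b.1 % 2 = 1 ∧ b.2 % 2 = 1) : a = b := by
  obtain ⟨i, j, c, hc, rfl⟩ := hT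
  have ha' := haT.1
  have hb' := hbT.1
  simp only [Set.mem_insert_iff, Set.mem_singleton_iff] at ha' hb'
  obtain ⟨ha1, ha2⟩ := hao
  obtain ⟨hb1, hb2⟩ := hbo
  rcases ha' with rfl | rfl | rfl | rfl <;> rcases hb' with rfl | rfl | rfl | rfl <;>
    simp_all [Prod.ext_iff] <;> omega

def blackB : Finset Cell :=
  {(1,1),(1,3),(1,5),(1,7),(3,1),(3,3),(3,5),(3,7),(5,1),(5,3),(5,5),(5,7)}

/-- Deficient 5×7 Lemma. -/
theorem deficient_five_seven (D : Set Cell) (hsub : D ⊆ rect 5 7)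
    (h : (∃ i j : ℤ, Even i ∧ D = ({(i, j), (i, j + 1)} : Set Cell)) ∨
         (∃ i j : ℤ, Even j ∧ D = ({(i, j), (i + 1, j)} : Set Cell))) :
    ¬ Tileable (rect 5 7 \ D) := by
  classical
  rintro ⟨P, htrom, hdisj, hU⟩
  set S : Set Cell := rect 5 7 \ D with hSdef
  -- the rectangle as a Finset
  have hrect : rect 5 7 = ↑(Finset.Icc (1:ℤ) 5 ×ˢ Finset.Icc (1:ℤ) 7) := by
    ext ⟨x, y⟩
    simp only [rect, Set.mem_setOf_eq, Finset.coe_product, Set.mem_prod, Finset.mem_coe, Finset.mem_Icc]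
    tauto
  have hrectfin : (rect 5 7).Finite := by rw [hrect]; exact (Finset.Icc (1:ℤ) 5 ×ˢ Finset.Icc (1:ℤ) 7).finite_toSet
  have hrectcard : (rect 5 7).ncard = 35 := by
    rw [hrect, Set.ncard_coe_finset, Finset.card_product]
    simp [Int.card_Icc]
  have hSfin : S.Finite := hrectfin.subset Set.diff_subset
  -- cardinality of S
  have hDfin : D.Finite := by
    rcases h with ⟨i, j, _, rfl⟩ | ⟨i, j, _, rfl⟩ <;> exact (Set.finite_singleton _).insert _
  have hD2 : D.ncard = 2 := by
    rcases h with ⟨i, j, _, rfl⟩ | ⟨i, j, _, rfl⟩ <;>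
      exact Set.ncard_pair (by simp [Prod.ext_iff])
  have hScard : S.ncard = 33 := by
    rw [hSdef, Set.ncard_diff hsub hDfin, hrectcard, hD2]
  -- black cells facts
  have hBodd : ∀ c ∈ blackB, c.1 % 2 = 1 ∧ c.2 % 2 = 1 := by decide
  have hBcard : blackB.card = 12 := by decide
  have hBS : (↑blackB : Set Cell) ⊆ S := by
    intro c hc
    rw [Finset.mem_coe] at hc
    have hodd := hBodd c hc
    constructor
    · fin_cases hc <;> norm_num [rect]
    · intro hcD
      rcases h with ⟨i, j, hev, rfl⟩ | ⟨i, j, hev, rfl⟩ <;>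
        rw [Int.even_iff] at hev <;>
        simp only [Set.mem_insert_iff, Set.mem_singleton_iff] at hcD <;>
        rcases hcD with rfl | rfl <;> simp_all
  -- P is finite
  have hPsub : ∀ p ∈ P, p ⊆ S := fun p hp => hU ▸ Set.subset_sUnion_of_mem hp
  have hPfin : P.Finite := hSfin.finite_subsets.subset fun p hp => hPsub p hp
  set F : Finset (Set Cell) := hPfin.toFinset with hFdef
  have hF : (↑F : Set (Set Cell)) = P := hPfin.coe_toFinset
  have hmemF : ∀ p ∈ F, p ∈ P := fun p hp => hF ▸ hp
  have hfinF : ∀ p ∈ F, p.Finite := fun p hp => hSfin.subset (hPsub p (hmemF p hp))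
  have hdisjF : (↑F : Set (Set Cell)).PairwiseDisjoint id := hF ▸ hdisj
  have hUF : ⋃₀ (↑F : Set (Set Cell)) = S := by rw [hF, hU]
  -- counting the pieces: 3 * |F| = 33
  have E1 : S.ncard = ∑ p ∈ F, (p ∩ S).ncard := by
    have := ncard_sUnion_inter F hdisjF hfinF S
    rwa [hUF, Set.inter_self] at this
  have E1' : (33 : ℕ) = 3 * F.card := by
    rw [← hScard, E1]
    rw [Finset.sum_congr rfl fun p hp => by
      rw [Set.inter_eq_left.mpr (hPsub p (hmemF p hp)),
        tromino_ncard (htrom p (hmemF p hp))]]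
    simp [Finset.sum_const, Nat.mul_comm]
  -- counting black cells: 12 ≤ |F|
  have E2 : (12 : ℕ) = ∑ p ∈ F, (p ∩ ↑blackB).ncard := by
    have := ncard_sUnion_inter F hdisjF hfinF ↑blackB
    rwa [hUF, Set.inter_eq_right.mpr hBS, Set.ncard_coe_finset, hBcard] at this
  have E2' : (12 : ℕ) ≤ F.card := by
    rw [E2]
    calc ∑ p ∈ F, (p ∩ ↑blackB).ncard ≤ ∑ _p ∈ F, 1 := by
          refine Finset.sum_le_sum fun p hp => ?_
          rw [Set.ncard_le_one ((hfinF p hp).inter_of_left _)]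
          rintro a ⟨haT, haB⟩ b ⟨hbT, hbB⟩
          exact tromino_black_unique (htrom p (hmemF p hp)) haT hbT
            (hBodd a (Finset.mem_coe.mp haB)) (hBodd b (Finset.mem_coe.mp hbB))
      _ = F.card := by simp
  omega
end
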